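/- arXiv:2305.14342 — 5 statements merged into one kernel-verified Lean document; each statement's English description precedes it below -/
import Mathlib

section
/- Let L: ℝ^d → ℝ be twice continuously differentiable and strictly convex with minimizer θ*, let μ = λ_min(∇²L(θ*)), and suppose there exists R > 0 such that for all θ, θ' with ‖θ-θ'‖₂ ≤ R we have ‖(∇²L(θ'))⁻¹ ∇²L(θ)‖₂ ≤ 2. Then for any θ with L(θ) - min L ≤ μR²/4, it holds that ‖θ - θ*‖₂ ≤ 2·sqrt((L(θ) - min L)/μ) ≤ R. -/
/-!
Along the segment from `θstar` to a point `x` of the ball of radius `R`, the Hessian comparison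
gives `H(y) ≥ H(θstar) / 2 ≥ μ / 2`; as the gradient vanishes at `θstar`, integrating twice yields
the quadratic growth `L x - L θstar ≥ μ / 4 * ‖x - θstar‖ ^ 2` on that ball. Convexity confines
every `θ` with loss at most `μ R² / 4` to the ball: otherwise the point of `[θstar, θ]` at distance
`R` would have loss at least `μ R² / 4` and, by convexity, strictly less than the loss of `θ`.

The Hessian comparison `H(θ) ≤ ‖H(θ')⁻¹ H(θ)‖ • H(θ')` comes from conjugating by the square root
`S` of `H(θ')`: the symmetric matrix `S⁻¹ H(θ) S⁻¹` is similar to `H(θ')⁻¹ H(θ)`, so its eigenvalues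
are bounded by the operator norm of the latter.
-/

open scoped InnerProductSpace
open Matrix
noncomputable section
open Set

lemma monotoneOn_Icc_of_hasDerivAt_nonneg {g g' : ℝ → ℝ} {a b : ℝ}
    (hg : ∀ t, HasDerivAt g (g' t) t) (hg' : ∀ t ∈ Icc a b, 0 ≤ g' t) :
    MonotoneOn g (Icc a b) :=
  monotoneOn_of_hasDerivWithinAt_nonneg (convex_Icc a b)
    (fun t _ => (hg t).continuousAt.continuousWithinAt) (fun t _ => (hg t).hasDerivWithinAt)
    (fun t ht => hg' t (interior_subset ht))

lemma div_two_le_sub_of_le_second_deriv {f f' f'' : ℝ → ℝ} {c : ℝ}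
    (hf : ∀ t, HasDerivAt f (f' t) t) (hf' : ∀ t, HasDerivAt f' (f'' t) t) (h0 : f' 0 = 0)
    (hc : ∀ t ∈ Icc (0 : ℝ) 1, c ≤ f'' t) :
    c / 2 ≤ f 1 - f 0 := by
  have hlin : ∀ t ∈ Icc (0 : ℝ) 1, c * t ≤ f' t := by
    have hmono := monotoneOn_Icc_of_hasDerivAt_nonneg
      (fun t => (hf' t).sub ((hasDerivAt_id t).const_mul c))
      (fun t ht => by simpa using hc t ht)
    intro t ht
    simpa [h0] using hmono (left_mem_Icc.2 zero_le_one) ht ht.1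
  have hsq (t : ℝ) : HasDerivAt (fun s => c / 2 * s ^ 2) (c * t) t :=
    ((hasDerivAt_pow 2 t).const_mul (c / 2)).congr_deriv (by norm_num; ring)
  have hmono := monotoneOn_Icc_of_hasDerivAt_nonneg (fun t => (hf t).sub (hsq t))
    (fun t ht => sub_nonneg.2 (hlin t ht))
  have h01 : f 0 - c / 2 * 0 ^ 2 ≤ f 1 - c / 2 * 1 ^ 2 :=
    hmono (left_mem_Icc.2 zero_le_one) (right_mem_Icc.2 zero_le_one) zero_le_one
  linarith

section Hessian

variable {E : Type*} [NormedAddCommGroup E] [InnerProductSpace ℝ E] [CompleteSpace E]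
  {f : E → ℝ} {f' : E → E} {f'' : E → E →L[ℝ] E} {x₀ : E}

lemma IsLocalMin.hasGradientAt_eq_zero {g : E} (hmin : IsLocalMin f x₀)
    (hf : HasGradientAt f g x₀) : g = 0 := by
  simpa using hmin.hasFDerivAt_eq_zero (hasGradientAt_iff_hasFDerivAt.mp hf)

lemma div_two_le_sub_of_le_inner_hessian (hf : ∀ x, HasGradientAt f (f' x) x)
    (hf' : ∀ x, HasFDerivAt f' (f'' x) x) (h0 : f' x₀ = 0) {x : E} {c : ℝ}
    (hc : ∀ t ∈ Icc (0 : ℝ) 1, c ≤ ⟪x - x₀, f'' (x₀ + t • (x - x₀)) (x - x₀)⟫_ℝ) :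
    c / 2 ≤ f x - f x₀ := by
  set v := x - x₀
  have hγ (t : ℝ) : HasDerivAt (fun s : ℝ => x₀ + s • v) v t := by
    simpa using ((hasDerivAt_id t).smul_const v).const_add x₀
  have := div_two_le_sub_of_le_second_deriv (f := fun t => f (x₀ + t • v))
    (f' := fun t => ⟪v, f' (x₀ + t • v)⟫_ℝ) (f'' := fun t => ⟪v, f'' (x₀ + t • v) v⟫_ℝ)
    (fun t => by
      have h := (hasGradientAt_iff_hasFDerivAt.mp (hf _)).comp_hasDerivAt t (hγ t)
      rw [InnerProductSpace.toDual_apply_apply, real_inner_comm] at h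
      exact h)
    (fun t => ((innerSL ℝ v).hasFDerivAt.comp_hasDerivAt t ((hf' _).comp_hasDerivAt t (hγ t))))
    (by simp [h0]) hc
  simpa [v] using this

end Hessian

lemma ConvexOn.norm_sub_le_of_le_on_sphere {E : Type*} [NormedAddCommGroup E] [NormedSpace ℝ E]
    {f : E → ℝ} (hf : ConvexOn ℝ univ f) {x₀ x : E} {δ R : ℝ} (hδ : 0 < δ) (hR : 0 ≤ R)
    (hsphere : ∀ y, ‖y - x₀‖ = R → δ ≤ f y - f x₀) (hx : f x - f x₀ ≤ δ) :
    ‖x - x₀‖ ≤ R := by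
  by_contra! hfar
  have hr : 0 < ‖x - x₀‖ := hR.trans_lt hfar
  set t := R / ‖x - x₀‖
  have ht0 : 0 ≤ t := by positivity
  have ht1 : t < 1 := (div_lt_one hr).2 hfar
  have hy : ‖x₀ + t • (x - x₀) - x₀‖ = R := by
    simp [norm_smul, t, abs_of_nonneg hR, hr.ne']
  have hconv : f (x₀ + t • (x - x₀)) ≤ (1 - t) * f x₀ + t * f x := by
    have h := hf.2 (mem_univ x₀) (mem_univ x) (sub_nonneg.2 ht1.le) ht0 (sub_add_cancel 1 t)
    rwa [show (1 - t) • x₀ + t • x = x₀ + t • (x - x₀) by module] at h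
  nlinarith [hsphere _ hy]

section Matrix

variable {n : Type*} [Fintype n] [DecidableEq n] {A B : Matrix n n ℝ}

lemma Matrix.inner_toEuclideanLin (A : Matrix n n ℝ) (x y : EuclideanSpace ℝ n) :
    ⟪x, toEuclideanLin A y⟫_ℝ = x ⬝ᵥ A *ᵥ y :=
  inner_toEuclideanCLM A x y

open scoped MatrixOrder in
lemma Matrix.inner_toEuclideanLin_le_of_le (h : A ≤ B) (v : EuclideanSpace ℝ n) :
    ⟪v, toEuclideanLin A v⟫_ℝ ≤ ⟪v, toEuclideanLin B v⟫_ℝ := by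
  have := h.dotProduct_mulVec_nonneg v.ofLp
  simp only [star_trivial, sub_mulVec, dotProduct_sub, sub_nonneg] at this
  simpa [inner_toEuclideanLin] using this

open scoped MatrixOrder in
lemma Matrix.IsHermitian.inner_toEuclideanLin_le (hA : A.IsHermitian) {c : ℝ}
    (h : ∀ x ∈ spectrum ℝ A, x ≤ c) (v : EuclideanSpace ℝ n) :
    ⟪v, toEuclideanLin A v⟫_ℝ ≤ c * ‖v‖ ^ 2 := by
  simpa [Algebra.algebraMap_eq_smul_one, inner_smul_right, real_inner_self_eq_norm_sq] using
    inner_toEuclideanLin_le_of_le (le_algebraMap_of_spectrum_le h hA) v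

open scoped MatrixOrder in
lemma Matrix.IsHermitian.le_inner_toEuclideanLin (hA : A.IsHermitian) {c : ℝ}
    (h : ∀ x ∈ spectrum ℝ A, c ≤ x) (v : EuclideanSpace ℝ n) :
    c * ‖v‖ ^ 2 ≤ ⟪v, toEuclideanLin A v⟫_ℝ := by
  simpa [Algebra.algebraMap_eq_smul_one, inner_smul_right, real_inner_self_eq_norm_sq] using
    inner_toEuclideanLin_le_of_le (algebraMap_le_of_le_spectrum h hA) v

lemma Matrix.abs_le_opNorm_of_mem_spectrum {x : ℝ} (hx : x ∈ spectrum ℝ A) :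
    |x| ≤ ‖(toEuclideanLin A).toContinuousLinearMap‖ := by
  rw [← spectrum_toLpLin 2, ← LinearMap.coe_toContinuousLinearMap (toEuclideanLin A),
    ← ContinuousLinearMap.spectrum_eq] at hx
  exact (spectrum.norm_le_norm_mul_of_mem hx).trans
    (mul_le_of_le_one_right (norm_nonneg _) ContinuousLinearMap.norm_id_le)

lemma Matrix.exists_norm_eq_one_toEuclideanLin_eq_smul {x : ℝ} (hx : x ∈ spectrum ℝ A) :
    ∃ v : EuclideanSpace ℝ n, ‖v‖ = 1 ∧ toEuclideanLin A v = x • v := by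
  rw [← spectrum_toLpLin 2, ← Module.End.hasEigenvalue_iff_mem_spectrum] at hx
  obtain ⟨v, hv, hv0⟩ := hx.exists_hasEigenvector
  refine ⟨‖v‖⁻¹ • v, norm_smul_inv_norm hv0, ?_⟩
  rw [map_smul, Module.End.mem_eigenspace_iff.mp hv, smul_comm]

lemma Matrix.PosDef.pos_of_toEuclideanLin_eq_smul (hA : A.PosDef) {v : EuclideanSpace ℝ n}
    (hv : v ≠ 0) {c : ℝ} (h : toEuclideanLin A v = c • v) : 0 < c := by
  have hpos := hA.dotProduct_mulVec_pos (x := v.ofLp) (by simpa using hv)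
  rw [star_trivial, ← inner_toEuclideanLin, h, real_inner_smul_right,
    real_inner_self_eq_norm_sq] at hpos
  exact pos_of_mul_pos_left hpos (by positivity)

lemma Matrix.PosDef.inner_toEuclideanLin_le_mul_inner (hA : A.PosDef) (hB : B.IsHermitian)
    {c : ℝ} (hc : ‖(toEuclideanLin (A⁻¹ * B)).toContinuousLinearMap‖ ≤ c)
    (v : EuclideanSpace ℝ n) :
    ⟪v, toEuclideanLin B v⟫_ℝ ≤ c * ⟪v, toEuclideanLin A v⟫_ℝ := by
  open scoped MatrixOrder in
  obtain ⟨S, hS, hSS, hSu⟩ : ∃ S : Matrix n n ℝ, S.IsHermitian ∧ S * S = A ∧ IsUnit S :=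
    ⟨CFC.sqrt A, (CFC.sqrt_nonneg A).posSemidef.isHermitian,
      CFC.sqrt_mul_sqrt_self A hA.posSemidef.nonneg, (CFC.isUnit_sqrt_iff A).2 hA.isUnit⟩
  have hSd := (isUnit_iff_isUnit_det S).1 hSu
  set T := S⁻¹ * B * S⁻¹
  have hT : T.IsHermitian := by
    have := isHermitian_conjTranspose_mul_mul S⁻¹ hB
    rwa [hS.inv.eq] at this
  have hspec : spectrum ℝ T = spectrum ℝ (A⁻¹ * B) := by
    have : A⁻¹ * B = (↑hSu.unit⁻¹ : Matrix n n ℝ) * T * hSu.unit := by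
      simp [T, ← hSS, Matrix.mul_inv_rev, Matrix.mul_assoc, nonsing_inv_mul S hSd]
    rw [this, spectrum.units_conjugate']
  have hTS : S * T * S = B := by
    simp [T, Matrix.mul_assoc, nonsing_inv_mul S hSd, mul_nonsing_inv_cancel_left _ _ hSd]
  have hSsymm := isSymmetric_toEuclideanLin_iff.2 hS
  calc ⟪v, toEuclideanLin B v⟫_ℝ
      = ⟪toEuclideanLin S v, toEuclideanLin T (toEuclideanLin S v)⟫_ℝ := by
        rw [hSsymm, ← hTS]; simp [toLpLin_apply, mulVec_mulVec]
    _ ≤ c * ‖toEuclideanLin S v‖ ^ 2 := hT.inner_toEuclideanLin_le (fun x hx =>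
        (le_abs_self x).trans ((abs_le_opNorm_of_mem_spectrum (hspec ▸ hx)).trans hc)) _
    _ = c * ⟪v, toEuclideanLin A v⟫_ℝ := by
        rw [← real_inner_self_eq_norm_sq, hSsymm, ← hSS]; simp [toLpLin_apply, mulVec_mulVec]

end Matrix

theorem sophia_small_loss_imply_small_distance_general
    (d : ℕ)
    (L : EuclideanSpace ℝ (Fin d) → ℝ)
    (grad : EuclideanSpace ℝ (Fin d) → EuclideanSpace ℝ (Fin d))
    (hess : EuclideanSpace ℝ (Fin d) → Matrix (Fin d) (Fin d) ℝ)
    (hgrad : ∀ θ, HasGradientAt L (grad θ) θ)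
    (hhess : ∀ θ, HasFDerivAt grad ((Matrix.toEuclideanLin (hess θ)).toContinuousLinearMap) θ)
    (hconv : StrictConvexOn ℝ Set.univ L)
    (hpd : ∀ θ, (hess θ).PosDef)
    (θstar : EuclideanSpace ℝ (Fin d))
    (hmin : ∀ θ, L θstar ≤ L θ)
    (μ : ℝ)
    (hμ : IsLeast {c : ℝ | ∃ v : EuclideanSpace ℝ (Fin d), ‖v‖ = 1 ∧
      Matrix.toEuclideanLin (hess θstar) v = c • v} μ)
    (R : ℝ) (hR : 0 < R)
    (hhessLip : ∀ θ θ' : EuclideanSpace ℝ (Fin d), ‖θ - θ'‖ ≤ R →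
      ‖(Matrix.toEuclideanLin ((hess θ')⁻¹ * hess θ)).toContinuousLinearMap‖ ≤ 2)
    (θ : EuclideanSpace ℝ (Fin d))
    (hloss : L θ - L θstar ≤ μ * R ^ 2 / 4) :
    ‖θ - θstar‖ ≤ 2 * Real.sqrt ((L θ - L θstar) / μ) ∧
    2 * Real.sqrt ((L θ - L θstar) / μ) ≤ R := by
  obtain ⟨u, hu, hHu⟩ := hμ.1
  have hμ_pos : 0 < μ := (hpd θstar).pos_of_toEuclideanLin_eq_smul (by rintro rfl; simp at hu) hHu
  have hlow (v) : μ * ‖v‖ ^ 2 ≤ ⟪v, toEuclideanLin (hess θstar) v⟫_ℝ :=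
    (hpd θstar).isHermitian.le_inner_toEuclideanLin
      (fun _ hc => hμ.2 (exists_norm_eq_one_toEuclideanLin_eq_smul hc)) v
  have hgrad_zero : grad θstar = 0 :=
    IsLocalMin.hasGradientAt_eq_zero (.of_forall hmin) (hgrad θstar)
  have hgrowth (x) (hx : ‖x - θstar‖ ≤ R) : μ / 4 * ‖x - θstar‖ ^ 2 ≤ L x - L θstar := by
    suffices hsegment : ∀ t ∈ Icc (0 : ℝ) 1, μ / 2 * ‖x - θstar‖ ^ 2 ≤
        ⟪x - θstar, toEuclideanLin (hess (θstar + t • (x - θstar))) (x - θstar)⟫_ℝ by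
      linarith [div_two_le_sub_of_le_inner_hessian hgrad hhess hgrad_zero hsegment]
    intro t ht
    have hnear : ‖θstar - (θstar + t • (x - θstar))‖ ≤ R := by
      simpa [norm_smul, abs_of_nonneg ht.1] using
        (mul_le_of_le_one_left (norm_nonneg _) ht.2).trans hx
    linarith [hlow (x - θstar), (hpd _).inner_toEuclideanLin_le_mul_inner
      (hpd θstar).isHermitian (hhessLip θstar _ hnear) (x - θstar)]
  have hclose : ‖θ - θstar‖ ≤ R :=
    hconv.convexOn.norm_sub_le_of_le_on_sphere (by positivity : 0 < μ * R ^ 2 / 4) hR.le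
      (fun y hy => by simpa [hy, mul_div_right_comm] using hgrowth y hy.le) hloss
  have hΔ := hgrowth θ hclose
  constructor
  · have : ‖θ - θstar‖ / 2 ≤ √((L θ - L θstar) / μ) :=
      (Real.le_sqrt (by positivity) (div_nonneg (sub_nonneg.2 (hmin θ)) hμ_pos.le)).2
        (by rw [le_div_iff₀ hμ_pos]; linarith)
    linarith
  · have : √((L θ - L θstar) / μ) ≤ R / 2 :=
      (Real.sqrt_le_left (by positivity)).2 (by rw [div_le_iff₀ hμ_pos]; linarith)
    linarith

/-- Small loss implies small distance to the minimizer
(Lemma 4.2 / `small_loss_imply_small_distance`). -/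
theorem sophia_small_loss_imply_small_distance
    (d : ℕ)
    (L : EuclideanSpace ℝ (Fin d) → ℝ)
    (grad : EuclideanSpace ℝ (Fin d) → EuclideanSpace ℝ (Fin d))
    (hess : EuclideanSpace ℝ (Fin d) → Matrix (Fin d) (Fin d) ℝ)
    (hC2 : ContDiff ℝ 2 L)
    (hgrad : ∀ θ, HasGradientAt L (grad θ) θ)
    (hhess : ∀ θ, HasFDerivAt grad ((Matrix.toEuclideanLin (hess θ)).toContinuousLinearMap) θ)
    (hconv : StrictConvexOn ℝ Set.univ L)
    (hpd : ∀ θ, (hess θ).PosDef)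
    (θstar : EuclideanSpace ℝ (Fin d))
    (hmin : ∀ θ, L θstar ≤ L θ)
    (μ : ℝ)
    (hμ : IsLeast {c : ℝ | ∃ v : EuclideanSpace ℝ (Fin d), ‖v‖ = 1 ∧
      Matrix.toEuclideanLin (hess θstar) v = c • v} μ)
    (R : ℝ) (hR : 0 < R)
    (hhessLip : ∀ θ θ' : EuclideanSpace ℝ (Fin d), ‖θ - θ'‖ ≤ R →
      ‖(Matrix.toEuclideanLin ((hess θ')⁻¹ * hess θ)).toContinuousLinearMap‖ ≤ 2)
    (θ : EuclideanSpace ℝ (Fin d))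
    (hloss : L θ - L θstar ≤ μ * R ^ 2 / 4) :
    ‖θ - θstar‖ ≤ 2 * Real.sqrt ((L θ - L θstar) / μ) ∧
    2 * Real.sqrt ((L θ - L θstar) / μ) ≤ R :=
  sophia_small_loss_imply_small_distance_general d L grad hess hgrad hhess hconv hpd θstar hmin μ hμ
    R hR hhessLip θ hloss
end
end

section
/- Under the same assumptions (strict convexity, minimizer θ*, μ = λ_min(∇²L(θ*)), and multiplicative Hessian continuity at scale R), for any θ with ‖∇L(θ)‖₂ ≤ Rμ/2, it holds that ‖θ - θ*‖₂ ≤ 2‖∇L(θ)‖₂/μ ≤ R. -/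
/-!
Along the ray `θstar + t • e` towards `θ`, the function `g t = ⟪∇L(θstar + t • e), e⟫`
vanishes at `0` and has derivative `⟪∇²L(θstar + t • e) e, e⟫ > 0`. Near `θstar` the Hessian
satisfies `(μ / 2) ‖x‖ ≤ ‖∇²L(ψ) x‖`, since `∇²L(ψ)⁻¹ ∇²L(θstar)` has norm at most `2`; for a
positive operator such a bound bounds every eigenvalue, hence the quadratic form, so `g' ≥ μ / 2`
on `[0, R]`. If `‖θ - θstar‖ > R`, then `g ‖θ - θstar‖ > g R ≥ R μ / 2 ≥ ‖∇L(θ)‖`, which is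
absurd; otherwise the mean value theorem gives `(μ / 2) ‖θ - θstar‖ ≤ g ‖θ - θstar‖ ≤ ‖∇L(θ)‖`.
-/

open scoped InnerProductSpace
open Matrix
noncomputable section

lemma mul_le_of_le_deriv_of_deriv_pos {g g' : ℝ → ℝ} (hg : ∀ t, HasDerivAt g (g' t) t)
    (hg' : ∀ t, 0 < g' t) (hg0 : g 0 = 0) {m R : ℝ} (hR : 0 ≤ R)
    (hm : ∀ t ∈ Set.Ioo 0 R, m ≤ g' t) {r : ℝ} (hr : 0 ≤ r) (hgr : g r ≤ m * R) :
    m * r ≤ g r := by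
  have hmvt : ∀ s ∈ Set.Icc 0 R, m * s ≤ g s := fun s hs => by
    have := (convex_Icc 0 R).mul_sub_le_image_sub_of_le_deriv
      (fun t _ => (hg t).continuousAt.continuousWithinAt)
      (fun t _ => (hg t).differentiableAt.differentiableWithinAt)
      (fun t ht => by rw [interior_Icc] at ht; rw [(hg t).deriv]; exact hm t ht)
      0 ⟨le_rfl, hR⟩ s hs hs.1
    simpa [hg0] using this
  have hrR : r ≤ R := by
    by_contra! hRr
    have := strictMono_of_hasDerivAt_pos hg hg' hRr
    linarith [hmvt R ⟨hR, le_rfl⟩]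
  exact hmvt r ⟨hr, hrR⟩

section InnerProductSpace

variable {E : Type*} [NormedAddCommGroup E] [InnerProductSpace ℝ E]

def unitEigenvalues (T : E →ₗ[ℝ] E) : Set ℝ :=
  {c | ∃ v : E, ‖v‖ = 1 ∧ T v = c • v}

lemma inner_apply_self_eq_of_apply_eq_smul {T : E →ₗ[ℝ] E} {c : ℝ} {v : E}
    (hv : ‖v‖ = 1) (hTv : T v = c • v) : ⟪T v, v⟫_ℝ = c := by
  rw [hTv, real_inner_smul_left, real_inner_self_eq_norm_sq, hv, one_pow, mul_one]

lemma mul_norm_le_norm_apply_of_mul_norm_sq_le_inner {T : E →ₗ[ℝ] E} {c : ℝ}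
    (h : ∀ x, c * ‖x‖ ^ 2 ≤ ⟪T x, x⟫_ℝ) (x : E) : c * ‖x‖ ≤ ‖T x‖ := by
  rcases (norm_nonneg x).eq_or_lt with hx | hx
  · rw [← hx, mul_zero]; exact norm_nonneg _
  · refine le_of_mul_le_mul_right ?_ hx
    calc c * ‖x‖ * ‖x‖ = c * ‖x‖ ^ 2 := by ring
      _ ≤ ⟪T x, x⟫_ℝ := h x
      _ ≤ ‖T x‖ * ‖x‖ := real_inner_le_norm _ _

lemma hasDerivAt_inner_apply_add_smul {grad : E → E} {H : E → E →L[ℝ] E}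
    (hH : ∀ y, HasFDerivAt grad (H y) y) (x₀ e : E) (t : ℝ) :
    HasDerivAt (fun s : ℝ => ⟪grad (x₀ + s • e), e⟫_ℝ) ⟪H (x₀ + t • e) e, e⟫_ℝ t := by
  have hline : HasDerivAt (fun s : ℝ => x₀ + s • e) e t := by
    simpa using ((hasDerivAt_id t).smul_const e).const_add x₀
  exact ((hH _).comp_hasDerivAt t hline).inner ℝ (hasDerivAt_const t e) |>.congr_deriv (by simp)

lemma mul_norm_sub_le_norm_of_hasFDerivAt {grad : E → E} {H : E → E →L[ℝ] E}
    (hH : ∀ y, HasFDerivAt grad (H y) y) (hpos : ∀ y v, v ≠ 0 → 0 < ⟪H y v, v⟫_ℝ)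
    {x₀ : E} (hx₀ : grad x₀ = 0) {m R : ℝ} (hR : 0 ≤ R)
    (hm : ∀ y, ‖x₀ - y‖ ≤ R → ∀ v, m * ‖v‖ ^ 2 ≤ ⟪H y v, v⟫_ℝ)
    {x : E} (hx : ‖grad x‖ ≤ m * R) :
    m * ‖x - x₀‖ ≤ ‖grad x‖ := by
  rcases eq_or_ne x x₀ with rfl | hne
  · simp
  set r := ‖x - x₀‖
  have hr : 0 < r := norm_pos_iff.mpr (sub_ne_zero.mpr hne)
  set e := r⁻¹ • (x - x₀)
  have he : ‖e‖ = 1 := by rw [norm_smul, norm_inv, norm_norm, inv_mul_cancel₀ hr.ne']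
  have hxe : x₀ + r • e = x := by simp [e, smul_smul, hr.ne']
  have hgr : ⟪grad x, e⟫_ℝ ≤ ‖grad x‖ := by
    simpa [he] using real_inner_le_norm (grad x) e
  have key := mul_le_of_le_deriv_of_deriv_pos (hasDerivAt_inner_apply_add_smul hH x₀ e)
    (fun t => hpos _ e (norm_ne_zero_iff.mp (he ▸ one_ne_zero))) (by simp [hx₀]) hR
    (fun t ht => by
      simpa [he] using hm _ (by simpa [norm_smul, he, abs_of_pos ht.1] using ht.2.le) e)
    hr.le (by simpa only [hxe] using hgr.trans hx)
  simp only [hxe] at key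
  linarith

variable [FiniteDimensional ℝ E]

lemma LinearMap.IsSymmetric.mul_norm_sq_le_inner_of_mem_lowerBounds {T : E →ₗ[ℝ] E}
    (hT : T.IsSymmetric) {μ : ℝ} (hμ : μ ∈ lowerBounds (unitEigenvalues T)) (x : E) :
    μ * ‖x‖ ^ 2 ≤ ⟪T x, x⟫_ℝ := by
  set b := hT.eigenvectorBasis rfl
  have hle : ∀ j, μ ≤ hT.eigenvalues rfl j := fun j =>
    hμ ⟨b j, b.orthonormal.1 j, hT.apply_eigenvectorBasis rfl j⟩
  have hquad : ⟪T x, x⟫_ℝ = ∑ j, hT.eigenvalues rfl j * ⟪b j, x⟫_ℝ ^ 2 := by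
    rw [← b.sum_inner_mul_inner (T x) x]
    refine Finset.sum_congr rfl fun j _ => ?_
    rw [hT, hT.apply_eigenvectorBasis rfl j, real_inner_smul_right, real_inner_comm x]
    simp only [RCLike.ofReal_real_eq_id, id_eq, b]
    ring
  have hnorm : ‖x‖ ^ 2 = ∑ j, ⟪b j, x⟫_ℝ ^ 2 := by
    rw [← real_inner_self_eq_norm_sq, ← b.sum_inner_mul_inner x x]
    simp only [real_inner_comm x, sq]
  rw [hquad, hnorm, Finset.mul_sum]
  exact Finset.sum_le_sum fun j _ => mul_le_mul_of_nonneg_right (hle j) (sq_nonneg _)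

lemma LinearMap.IsPositive.mul_norm_sq_le_inner_of_mul_norm_le {T : E →ₗ[ℝ] E}
    (hT : T.IsPositive) {m : ℝ} (h : ∀ x, m * ‖x‖ ≤ ‖T x‖) (x : E) :
    m * ‖x‖ ^ 2 ≤ ⟪T x, x⟫_ℝ := by
  refine hT.isSymmetric.mul_norm_sq_le_inner_of_mem_lowerBounds ?_ x
  rintro c ⟨v, hv, hTv⟩
  have hc : 0 ≤ c := inner_apply_self_eq_of_apply_eq_smul hv hTv ▸ hT.inner_nonneg_left v
  simpa [hv, hTv, norm_smul, abs_of_nonneg hc] using h v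

end InnerProductSpace

namespace Matrix

variable {n : Type*} [Fintype n] [DecidableEq n]

lemma PosDef.inner_toEuclideanLin_self_pos {A : Matrix n n ℝ} (hA : A.PosDef)
    {x : EuclideanSpace ℝ n} (hx : x ≠ 0) : 0 < ⟪toEuclideanLin A x, x⟫_ℝ := by
  simpa [EuclideanSpace.inner_eq_star_dotProduct, toLpLin_apply, dotProduct_comm] using
    hA.dotProduct_mulVec_pos (x := WithLp.ofLp x) (by simpa using hx)

lemma mul_norm_le_mul_norm_toEuclideanLin_of_norm_inv_mul_le {A B : Matrix n n ℝ}
    (hA : IsUnit A) (hB : IsUnit B) {μ K : ℝ}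
    (hμ : ∀ y, μ * ‖y‖ ≤ ‖toEuclideanLin B y‖)
    (hK : ‖(toEuclideanLin (A⁻¹ * B)).toContinuousLinearMap‖ ≤ K) (x : EuclideanSpace ℝ n) :
    μ * ‖x‖ ≤ K * ‖toEuclideanLin A x‖ := by
  set y := toEuclideanLin (B⁻¹ * A) x with hy
  have hBy : toEuclideanLin B y = toEuclideanLin A x := by
    rw [hy, ← LinearMap.comp_apply, ← toLpLin_mul_same, ← Matrix.mul_assoc,
      mul_nonsing_inv _ ((isUnit_iff_isUnit_det B).mp hB), Matrix.one_mul]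
  have hxy : toEuclideanLin (A⁻¹ * B) y = x := by
    rw [hy, ← LinearMap.comp_apply, ← toLpLin_mul_same, Matrix.mul_assoc, ← Matrix.mul_assoc B,
      mul_nonsing_inv _ ((isUnit_iff_isUnit_det B).mp hB), Matrix.one_mul,
      nonsing_inv_mul _ ((isUnit_iff_isUnit_det A).mp hA), toLpLin_one, LinearMap.id_apply]
  have hxK : ‖x‖ ≤ K * ‖y‖ := by
    calc ‖x‖ = ‖(toEuclideanLin (A⁻¹ * B)).toContinuousLinearMap y‖ := by
          rw [LinearMap.coe_toContinuousLinearMap', hxy]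
      _ ≤ _ := (ContinuousLinearMap.le_opNorm _ _).trans (by gcongr)
  have hK0 : 0 ≤ K := (norm_nonneg _).trans hK
  rcases le_or_gt 0 μ with hμ0 | hμ0
  · calc μ * ‖x‖ ≤ μ * (K * ‖y‖) := by gcongr
      _ = K * (μ * ‖y‖) := by ring
      _ ≤ K * ‖toEuclideanLin A x‖ := by rw [← hBy]; gcongr; exact hμ y
  · nlinarith [norm_nonneg x, norm_nonneg (toEuclideanLin A x)]

end Matrix

theorem sophia_small_gradient_imply_small_distance_general
    (d : ℕ)
    (L : EuclideanSpace ℝ (Fin d) → ℝ)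
    (grad : EuclideanSpace ℝ (Fin d) → EuclideanSpace ℝ (Fin d))
    (hess : EuclideanSpace ℝ (Fin d) → Matrix (Fin d) (Fin d) ℝ)
    (hgrad : ∀ θ, HasGradientAt L (grad θ) θ)
    (hhess : ∀ θ, HasFDerivAt grad ((Matrix.toEuclideanLin (hess θ)).toContinuousLinearMap) θ)
    (hpd : ∀ θ, (hess θ).PosDef)
    (θstar : EuclideanSpace ℝ (Fin d))
    (hmin : ∀ θ, L θstar ≤ L θ)
    (μ : ℝ)
    (hμ : IsLeast {c : ℝ | ∃ v : EuclideanSpace ℝ (Fin d), ‖v‖ = 1 ∧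
      Matrix.toEuclideanLin (hess θstar) v = c • v} μ)
    (R : ℝ) (hR : 0 < R)
    (hhessLip : ∀ θ θ' : EuclideanSpace ℝ (Fin d), ‖θ - θ'‖ ≤ R →
      ‖(Matrix.toEuclideanLin ((hess θ')⁻¹ * hess θ)).toContinuousLinearMap‖ ≤ 2)
    (θ : EuclideanSpace ℝ (Fin d))
    (hgradsmall : ‖grad θ‖ ≤ R * μ / 2) :
    ‖θ - θstar‖ ≤ 2 * ‖grad θ‖ / μ ∧ 2 * ‖grad θ‖ / μ ≤ R := by
  have hμpos : 0 < μ := by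
    obtain ⟨v, hv, hHv⟩ := hμ.1
    rw [← inner_apply_self_eq_of_apply_eq_smul hv hHv]
    exact (hpd θstar).inner_toEuclideanLin_self_pos (by rintro rfl; simp at hv)
  have hgrad_star : grad θstar = 0 := by
    simpa using (IsLocalMin.hasFDerivAt_eq_zero (Filter.Eventually.of_forall hmin)
      (hgrad θstar).hasFDerivAt)
  have hsym_star := isSymmetric_toEuclideanLin_iff.mpr (hpd θstar).isHermitian
  have hstar : ∀ y, μ * ‖y‖ ≤ ‖toEuclideanLin (hess θstar) y‖ :=
    mul_norm_le_norm_apply_of_mul_norm_sq_le_inner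
      (hsym_star.mul_norm_sq_le_inner_of_mem_lowerBounds hμ.2)
  have hnear : ∀ ψ, ‖θstar - ψ‖ ≤ R →
      ∀ v, μ / 2 * ‖v‖ ^ 2 ≤ ⟪toEuclideanLin (hess ψ) v, v⟫_ℝ := by
    intro ψ hψ
    have hψpos := isPositive_toEuclideanLin_iff.mpr (hpd ψ).posSemidef
    refine hψpos.mul_norm_sq_le_inner_of_mul_norm_le fun x => ?_
    linarith [mul_norm_le_mul_norm_toEuclideanLin_of_norm_inv_mul_le (hpd ψ).isUnit
      (hpd θstar).isUnit hstar (hhessLip θstar ψ hψ) x]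
  have hdist := mul_norm_sub_le_norm_of_hasFDerivAt hhess
    (fun ψ v hv => by simpa using (hpd ψ).inner_toEuclideanLin_self_pos hv) hgrad_star hR.le
    (by simpa using hnear) (by linarith : ‖grad θ‖ ≤ μ / 2 * R)
  constructor
  · rw [le_div_iff₀ hμpos]; linarith
  · rw [div_le_iff₀ hμpos]; linarith

/-- Small gradient implies small distance to the minimizer. -/
theorem sophia_small_gradient_imply_small_distance
    (d : ℕ)
    (L : EuclideanSpace ℝ (Fin d) → ℝ)
    (grad : EuclideanSpace ℝ (Fin d) → EuclideanSpace ℝ (Fin d))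
    (hess : EuclideanSpace ℝ (Fin d) → Matrix (Fin d) (Fin d) ℝ)
    (hC2 : ContDiff ℝ 2 L)
    (hgrad : ∀ θ, HasGradientAt L (grad θ) θ)
    (hhess : ∀ θ, HasFDerivAt grad ((Matrix.toEuclideanLin (hess θ)).toContinuousLinearMap) θ)
    (hconv : StrictConvexOn ℝ Set.univ L)
    (hpd : ∀ θ, (hess θ).PosDef)
    (θstar : EuclideanSpace ℝ (Fin d))
    (hmin : ∀ θ, L θstar ≤ L θ)
    (μ : ℝ)
    (hμ : IsLeast {c : ℝ | ∃ v : EuclideanSpace ℝ (Fin d), ‖v‖ = 1 ∧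
      Matrix.toEuclideanLin (hess θstar) v = c • v} μ)
    (R : ℝ) (hR : 0 < R)
    (hhessLip : ∀ θ θ' : EuclideanSpace ℝ (Fin d), ‖θ - θ'‖ ≤ R →
      ‖(Matrix.toEuclideanLin ((hess θ')⁻¹ * hess θ)).toContinuousLinearMap‖ ≤ 2)
    (θ : EuclideanSpace ℝ (Fin d))
    (hgradsmall : ‖grad θ‖ ≤ R * μ / 2) :
    ‖θ - θstar‖ ≤ 2 * ‖grad θ‖ / μ ∧ 2 * ‖grad θ‖ / μ ≤ R :=
  sophia_small_gradient_imply_small_distance_general d L grad hess hgrad hhess hpd θstar hmin μ hμ R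
    hR hhessLip θ hgradsmall
end
end

section
/- Under the assumptions of strict convexity, minimizer θ*, μ = λ_min(∇²L(θ*)), and multiplicative Hessian continuity at scale R: for any θ satisfying either L(θ) - min L ≤ μR²/16 or ‖∇L(θ)‖₂ ≤ Rμ/4, it holds that L(θ) - min L ≤ ∇L(θ)ᵀ(∇²L(θ))⁻¹∇L(θ) ≤ 4(L(θ) - min L). -/
open scoped InnerProductSpace
open Matrix
noncomputable section

/-!
Write `H θ` for the Hessian and `Δ = ⟪∇L θ, (H θ)⁻¹ ∇L θ⟫` for the Newton decrement.
The bound `‖(H θ')⁻¹ H θ‖ ≤ 2` gives `H θ ≤ 2 H θ'` in the Loewner order whenever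
`‖θ - θ'‖ ≤ R`, because `(H θ')^(-1/2) H θ (H θ')^(-1/2)` is similar to `(H θ')⁻¹ H θ`.

If `θ` were farther than `R` from `θ*`, the curvature `≥ μ / 2` on the segment from `θ*` to the
sphere of radius `R` would force `L θ - L θ* ≥ μ R² / 4` and `‖∇L θ‖ ≥ μ R / 2`, contradicting
either smallness hypothesis. Inside the ball, Taylor's formula from `θ` to `θ*` with
`H ≥ H θ / 2`, followed by completing the square, gives `L θ - L θ* ≤ Δ`. Conversely, Taylor's
formula along the Newton direction with `H ≤ 2 H θ` gives `L θ* ≤ L θ - s (1 - s) Δ` as long as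
`s ‖(H θ)⁻¹ ∇L θ‖ ≤ R`; the smallness hypothesis makes `‖(H θ)⁻¹ ∇L θ‖ ≤ 2 R`, so `s = 1 / 2`
is admissible and `Δ ≤ 4 (L θ - L θ*)`.
-/

open Set

lemma add_mul_sub_le_of_le_hasDerivAt {f f' : ℝ → ℝ} {a b c : ℝ} (hab : a ≤ b)
    (hf : ∀ t ∈ Icc a b, HasDerivAt f (f' t) t) (hc : ∀ t ∈ Icc a b, c ≤ f' t) :
    f a + c * (b - a) ≤ f b := by
  have hint : ∀ t ∈ interior (Icc a b), t ∈ Icc a b := fun t ht ↦ interior_subset ht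
  have := (convex_Icc a b).mul_sub_le_image_sub_of_le_deriv
    (fun t ht ↦ (hf t ht).continuousAt.continuousWithinAt)
    (fun t ht ↦ (hf t (hint t ht)).differentiableAt.differentiableWithinAt)
    (fun t ht ↦ (hf t (hint t ht)).deriv ▸ hc t (hint t ht))
    a (left_mem_Icc.2 hab) b (right_mem_Icc.2 hab) hab
  linarith

lemma add_add_mul_sq_le_of_le_hasDerivAt_two {f f' f'' : ℝ → ℝ} {a b c : ℝ} (hab : a ≤ b)
    (hf : ∀ t ∈ Icc a b, HasDerivAt f (f' t) t) (hf' : ∀ t ∈ Icc a b, HasDerivAt f' (f'' t) t)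
    (hc : ∀ t ∈ Icc a b, c ≤ f'' t) :
    f a + f' a * (b - a) + c * (b - a) ^ 2 / 2 ≤ f b := by
  have hg : ∀ t ∈ Icc a b, HasDerivAt (fun t ↦ f t - f' a * t - c * (t - a) ^ 2 / 2)
      (f' t - f' a - c * (t - a)) t := by
    intro t ht
    have hlin : HasDerivAt (fun t ↦ f' a * t) (f' a) t := by
      simpa using (hasDerivAt_id t).const_mul (f' a)
    have hquad : HasDerivAt (fun t ↦ c * (t - a) ^ 2 / 2) (c * (t - a)) t := by
      have := (((hasDerivAt_id' t).sub_const a).fun_pow 2).const_mul c |>.div_const 2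
      exact this.congr_deriv (by ring)
    exact ((hf t ht).sub hlin).sub hquad
  have hg' : ∀ t ∈ Icc a b, 0 ≤ f' t - f' a - c * (t - a) := fun t ht ↦ by
    have := add_mul_sub_le_of_le_hasDerivAt ht.1
      (fun s hs ↦ hf' s ⟨hs.1, hs.2.trans ht.2⟩) (fun s hs ↦ hc s ⟨hs.1, hs.2.trans ht.2⟩)
    linarith
  have := add_mul_sub_le_of_le_hasDerivAt hab hg hg'
  simp only [sub_self] at this
  nlinarith

lemma le_add_add_mul_sq_of_hasDerivAt_two_le {f f' f'' : ℝ → ℝ} {a b c : ℝ} (hab : a ≤ b)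
    (hf : ∀ t ∈ Icc a b, HasDerivAt f (f' t) t) (hf' : ∀ t ∈ Icc a b, HasDerivAt f' (f'' t) t)
    (hc : ∀ t ∈ Icc a b, f'' t ≤ c) :
    f b ≤ f a + f' a * (b - a) + c * (b - a) ^ 2 / 2 := by
  have := add_add_mul_sq_le_of_le_hasDerivAt_two (f := -f) (f' := -f') (f'' := -f'') (c := -c) hab
    (fun t ht ↦ (hf t ht).neg) (fun t ht ↦ (hf' t ht).neg) (fun t ht ↦ neg_le_neg (hc t ht))
  simp only [Pi.neg_apply] at this
  linarith

section CStarOrder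

variable {A : Type*} [PartialOrder A] [Ring A] [StarRing A] [TopologicalSpace A]
  [StarOrderedRing A] [Algebra ℝ A] [ContinuousFunctionalCalculus ℝ A IsSelfAdjoint]
  [NonnegSpectrumClass ℝ A] [IsSemitopologicalRing A] [T2Space A]

lemma le_smul_of_mul_eq_of_spectrum_le {b c t : A} {k : ℝ} (hc : IsStrictlyPositive c)
    (hb : IsSelfAdjoint b) (hbt : c * t = b) (ht : ∀ x ∈ spectrum ℝ t, x ≤ k) : b ≤ k • c := by
  obtain ⟨s, hs⟩ := hc.isUnit_cfcSqrt
  have hss : (s : A) * s = c := hs ▸ CFC.sqrt_mul_sqrt_self c hc.nonneg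
  have hsa : IsSelfAdjoint (s : A) := hs ▸ IsSelfAdjoint.of_nonneg (CFC.sqrt_nonneg c)
  have hsinv : IsSelfAdjoint (↑s⁻¹ : A) := by
    have hus : star s = s := Units.ext hsa.star_eq
    rw [IsSelfAdjoint, ← Units.coe_star_inv, hus]
  have hm : (↑s⁻¹ : A) * b * ↑s⁻¹ = s * t * ↑s⁻¹ := by
    rw [← hbt, ← hss]; simp [mul_assoc]
  have hmk : (↑s⁻¹ : A) * b * ↑s⁻¹ ≤ algebraMap ℝ A k := by
    apply le_algebraMap_of_spectrum_le _ (by simpa [hsinv.star_eq] using hb.conjugate (↑s⁻¹ : A))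
    rw [hm, spectrum.units_conjugate]; exact ht
  calc b = s * ((↑s⁻¹ : A) * b * ↑s⁻¹) * s := by simp [mul_assoc]
    _ ≤ s * algebraMap ℝ A k * s := hsa.conjugate_le_conjugate hmk
    _ = k • c := by rw [Algebra.algebraMap_eq_smul_one, mul_smul_comm, mul_one, smul_mul_assoc, hss]

end CStarOrder

namespace Matrix

variable {n : Type*} [Fintype n] [DecidableEq n]

lemma inner_toEuclideanLin_s4 (A : Matrix n n ℝ) (x y : EuclideanSpace ℝ n) :
    ⟪x, toEuclideanLin A y⟫_ℝ = WithLp.ofLp x ⬝ᵥ A *ᵥ WithLp.ofLp y :=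
  inner_toEuclideanCLM A x y

lemma PosDef.inner_toEuclideanLin_pos {A : Matrix n n ℝ} (hA : A.PosDef) {x : EuclideanSpace ℝ n}
    (hx : x ≠ 0) : 0 < ⟪x, toEuclideanLin A x⟫_ℝ := by
  rw [inner_toEuclideanLin_s4]
  exact hA.dotProduct_mulVec_pos (by simpa using hx)

lemma PosSemidef.inner_toEuclideanLin_nonneg {A : Matrix n n ℝ} (hA : A.PosSemidef)
    (x : EuclideanSpace ℝ n) : 0 ≤ ⟪x, toEuclideanLin A x⟫_ℝ := by
  rw [inner_toEuclideanLin_s4]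
  exact hA.dotProduct_mulVec_nonneg _

open scoped MatrixOrder in
lemma inner_toEuclideanLin_le_of_le_s4 {A B : Matrix n n ℝ} (h : A ≤ B) (x : EuclideanSpace ℝ n) :
    ⟪x, toEuclideanLin A x⟫_ℝ ≤ ⟪x, toEuclideanLin B x⟫_ℝ := by
  have := (le_iff.mp h).inner_toEuclideanLin_nonneg x
  rw [map_sub, LinearMap.sub_apply, inner_sub_right] at this
  linarith

lemma exists_norm_eq_one_of_mem_spectrum {A : Matrix n n ℝ} {c : ℝ} (hc : c ∈ spectrum ℝ A) :
    ∃ v : EuclideanSpace ℝ n, ‖v‖ = 1 ∧ toEuclideanLin A v = c • v := by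
  rw [← spectrum_toLpLin 2, ← Module.End.hasEigenvalue_iff_mem_spectrum] at hc
  obtain ⟨v, hv⟩ := hc.exists_hasEigenvector
  refine ⟨‖v‖⁻¹ • v, norm_smul_inv_norm hv.2, ?_⟩
  rw [map_smul, Module.End.mem_eigenspace_iff.mp hv.1, smul_comm]

lemma le_opNorm_of_mem_spectrum {A : Matrix n n ℝ} {c : ℝ} (hc : c ∈ spectrum ℝ A) :
    c ≤ ‖(toEuclideanLin A).toContinuousLinearMap‖ := by
  obtain ⟨v, hv1, hv⟩ := exists_norm_eq_one_of_mem_spectrum hc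
  calc c ≤ ‖c • v‖ := by rw [norm_smul, hv1, mul_one]; exact Real.le_norm_self c
    _ = ‖(toEuclideanLin A).toContinuousLinearMap v‖ := by rw [← hv]; rfl
    _ ≤ ‖(toEuclideanLin A).toContinuousLinearMap‖ := by
      simpa [hv1] using (toEuclideanLin A).toContinuousLinearMap.le_opNorm v

open scoped MatrixOrder in
lemma IsHermitian.mul_norm_sq_le_inner_toEuclideanLin {A : Matrix n n ℝ} (hA : A.IsHermitian)
    {μ : ℝ} (hμ : ∀ c ∈ spectrum ℝ A, μ ≤ c) (x : EuclideanSpace ℝ n) :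
    μ * ‖x‖ ^ 2 ≤ ⟪x, toEuclideanLin A x⟫_ℝ := by
  have := inner_toEuclideanLin_le_of_le_s4 (algebraMap_le_of_le_spectrum hμ hA) x
  have h1 : toEuclideanLin (1 : Matrix n n ℝ) x = x := by simp
  rwa [Algebra.algebraMap_eq_smul_one, map_smul, LinearMap.smul_apply, h1,
    inner_smul_right, real_inner_self_eq_norm_sq] at this

open scoped MatrixOrder in
lemma inner_toEuclideanLin_le_mul_of_opNorm_inv_mul_le {B C : Matrix n n ℝ} (hB : B.IsHermitian)
    (hC : C.PosDef) {k : ℝ} (h : ‖(toEuclideanLin (C⁻¹ * B)).toContinuousLinearMap‖ ≤ k)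
    (x : EuclideanSpace ℝ n) :
    ⟪x, toEuclideanLin B x⟫_ℝ ≤ k * ⟪x, toEuclideanLin C x⟫_ℝ := by
  have hBC : B ≤ k • C := le_smul_of_mul_eq_of_spectrum_le hC.isStrictlyPositive hB
    (mul_nonsing_inv_cancel_left C B hC.det_pos.ne'.isUnit)
    (fun c hc ↦ (le_opNorm_of_mem_spectrum hc).trans h)
  simpa [inner_smul_right] using inner_toEuclideanLin_le_of_le_s4 hBC x

end Matrix

lemma HasGradientAt.eq_zero_of_isLocalMin {F : Type*} [NormedAddCommGroup F] [InnerProductSpace ℝ F]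
    [CompleteSpace F] {f : F → ℝ} {g x : F} (hf : HasGradientAt f g x) (hx : IsLocalMin f x) :
    g = 0 := by
  simpa using hx.hasFDerivAt_eq_zero hf.hasFDerivAt

lemma hasDerivAt_add_smul {F : Type*} [NormedAddCommGroup F] [NormedSpace ℝ F] (x v : F) (t : ℝ) :
    HasDerivAt (fun t : ℝ ↦ x + t • v) v t := by
  simpa using ((hasDerivAt_id t).smul_const v).const_add x

lemma norm_smul_le_of_mem_Icc {F : Type*} [NormedAddCommGroup F] [NormedSpace ℝ F] (v : F) {t : ℝ}
    (ht : t ∈ Icc (0 : ℝ) 1) : ‖t • v‖ ≤ ‖v‖ := by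
  rw [norm_smul, Real.norm_of_nonneg ht.1]
  exact mul_le_of_le_one_left (norm_nonneg v) ht.2

section LineCalculus

variable {ι : Type*} [Fintype ι] {L : EuclideanSpace ℝ ι → ℝ}
  {grad : EuclideanSpace ℝ ι → EuclideanSpace ℝ ι}

local notation "E" => EuclideanSpace ℝ ι

lemma hasDerivAt_comp_add_smul (hgrad : ∀ θ, HasGradientAt L (grad θ) θ) (θ v : E) (t : ℝ) :
    HasDerivAt (fun t : ℝ ↦ L (θ + t • v)) ⟪grad (θ + t • v), v⟫_ℝ t := by
  simpa [Function.comp_def] using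
    (hgrad (θ + t • v)).hasFDerivAt.comp_hasDerivAt t (hasDerivAt_add_smul θ v t)

variable [DecidableEq ι] {hess : EuclideanSpace ℝ ι → Matrix ι ι ℝ}

lemma hasDerivAt_inner_grad_add_smul
    (hhess : ∀ θ, HasFDerivAt grad (toEuclideanLin (hess θ)).toContinuousLinearMap θ)
    (θ v : E) (t : ℝ) :
    HasDerivAt (fun t : ℝ ↦ ⟪grad (θ + t • v), v⟫_ℝ)
      ⟪v, toEuclideanLin (hess (θ + t • v)) v⟫_ℝ t := by
  have hgrad_line := (hhess (θ + t • v)).comp_hasDerivAt t (hasDerivAt_add_smul θ v t)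
  simpa [Function.comp_def, real_inner_comm v] using hgrad_line.inner ℝ (hasDerivAt_const t v)

lemma le_apply_add_of_le_hess (hgrad : ∀ θ, HasGradientAt L (grad θ) θ)
    (hhess : ∀ θ, HasFDerivAt grad (toEuclideanLin (hess θ)).toContinuousLinearMap θ)
    {θ v : E} {c : ℝ}
    (hc : ∀ t ∈ Icc (0 : ℝ) 1, c ≤ ⟪v, toEuclideanLin (hess (θ + t • v)) v⟫_ℝ) :
    L θ + ⟪grad θ, v⟫_ℝ + c / 2 ≤ L (θ + v) := by
  simpa using add_add_mul_sq_le_of_le_hasDerivAt_two zero_le_one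
    (fun t _ ↦ hasDerivAt_comp_add_smul hgrad θ v t)
    (fun t _ ↦ hasDerivAt_inner_grad_add_smul hhess θ v t) hc

lemma apply_add_le_of_hess_le (hgrad : ∀ θ, HasGradientAt L (grad θ) θ)
    (hhess : ∀ θ, HasFDerivAt grad (toEuclideanLin (hess θ)).toContinuousLinearMap θ)
    {θ v : E} {c : ℝ}
    (hc : ∀ t ∈ Icc (0 : ℝ) 1, ⟪v, toEuclideanLin (hess (θ + t • v)) v⟫_ℝ ≤ c) :
    L (θ + v) ≤ L θ + ⟪grad θ, v⟫_ℝ + c / 2 := by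
  simpa using le_add_add_mul_sq_of_hasDerivAt_two_le zero_le_one
    (fun t _ ↦ hasDerivAt_comp_add_smul hgrad θ v t)
    (fun t _ ↦ hasDerivAt_inner_grad_add_smul hhess θ v t) hc

lemma add_le_inner_grad_add_of_le_hess
    (hhess : ∀ θ, HasFDerivAt grad (toEuclideanLin (hess θ)).toContinuousLinearMap θ)
    {θ v : E} {c : ℝ}
    (hc : ∀ t ∈ Icc (0 : ℝ) 1, c ≤ ⟪v, toEuclideanLin (hess (θ + t • v)) v⟫_ℝ) :
    ⟪grad θ, v⟫_ℝ + c ≤ ⟪grad (θ + v), v⟫_ℝ := by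
  simpa using add_mul_sub_le_of_le_hasDerivAt zero_le_one
    (fun t _ ↦ hasDerivAt_inner_grad_add_smul hhess θ v t) hc

end LineCalculus

namespace Matrix.PosDef

variable {n : Type*} [Fintype n] [DecidableEq n] {H : Matrix n n ℝ}

lemma toEuclideanLin_apply_inv_apply (hH : H.PosDef) (x : EuclideanSpace ℝ n) :
    toEuclideanLin H (toEuclideanLin H⁻¹ x) = x := by
  simp [toLpLin_apply, mulVec_mulVec, mul_nonsing_inv _ hH.det_pos.ne'.isUnit]

lemma inner_inv_eq (hH : H.PosDef) (x : EuclideanSpace ℝ n) :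
    ⟪x, toEuclideanLin H⁻¹ x⟫_ℝ =
      ⟪toEuclideanLin H⁻¹ x, toEuclideanLin H (toEuclideanLin H⁻¹ x)⟫_ℝ := by
  rw [hH.toEuclideanLin_apply_inv_apply, real_inner_comm]

-- Completing the square: the quadratic `v ↦ ⟪x, v⟫ + ⟪v, H v⟫ / 4` is minimal at `v = -2 H⁻¹ x`.
lemma neg_inner_inv_le (hH : H.PosDef) (x v : EuclideanSpace ℝ n) :
    -⟪x, toEuclideanLin H⁻¹ x⟫_ℝ ≤ ⟪x, v⟫_ℝ + ⟪v, toEuclideanLin H v⟫_ℝ / 4 := by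
  set w := toEuclideanLin H⁻¹ x
  have hw : toEuclideanLin H w = x := hH.toEuclideanLin_apply_inv_apply x
  have hsymm := isSymmetric_toEuclideanLin_iff.2 hH.1
  have hsq := hH.posSemidef.inner_toEuclideanLin_nonneg (v + (2 : ℝ) • w)
  rw [map_add, map_smul, inner_add_left, inner_add_right, inner_add_right, inner_smul_left,
    inner_smul_right, inner_smul_right, inner_smul_left, hw, ← hsymm w v, hw] at hsq
  simp only [conj_trivial] at hsq
  linarith [real_inner_comm x v, real_inner_comm x w]

end Matrix.PosDef

section NewtonDecrement

variable {ι : Type*} [Fintype ι] [DecidableEq ι] {L : EuclideanSpace ℝ ι → ℝ}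
  {grad : EuclideanSpace ℝ ι → EuclideanSpace ℝ ι} {hess : EuclideanSpace ℝ ι → Matrix ι ι ℝ}
  {R μ : ℝ} {θ θstar : EuclideanSpace ℝ ι}

local notation "E" => EuclideanSpace ℝ ι

def HessianComparableWithin (hess : E → Matrix ι ι ℝ) (R : ℝ) : Prop :=
  ∀ θ θ', ‖θ - θ'‖ ≤ R →
    ∀ v, ⟪v, toEuclideanLin (hess θ) v⟫_ℝ ≤ 2 * ⟪v, toEuclideanLin (hess θ') v⟫_ℝ

namespace HessianComparableWithin

lemma le_hess_add (h : HessianComparableWithin hess R) (θ : E) {u : E} (hu : ‖u‖ ≤ R) (v : E) :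
    ⟪v, toEuclideanLin (hess θ) v⟫_ℝ ≤ 2 * ⟪v, toEuclideanLin (hess (θ + u)) v⟫_ℝ :=
  h θ (θ + u) (by simpa using hu) v

lemma hess_add_le (h : HessianComparableWithin hess R) (θ : E) {u : E} (hu : ‖u‖ ≤ R) (v : E) :
    ⟪v, toEuclideanLin (hess (θ + u)) v⟫_ℝ ≤ 2 * ⟪v, toEuclideanLin (hess θ) v⟫_ℝ :=
  h (θ + u) θ (by simpa using hu) v

lemma gap_and_norm_grad_lower_bounds_of_lt_norm_sub (h : HessianComparableWithin hess R)
    (hgrad : ∀ θ, HasGradientAt L (grad θ) θ)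
    (hhess : ∀ θ, HasFDerivAt grad (toEuclideanLin (hess θ)).toContinuousLinearMap θ)
    (hpd : ∀ θ, (hess θ).PosDef) (hstar : grad θstar = 0)
    (hμ : ∀ v, μ * ‖v‖ ^ 2 ≤ ⟪v, toEuclideanLin (hess θstar) v⟫_ℝ) (hμ0 : 0 ≤ μ) (hR : 0 < R)
    (hfar : R < ‖θ - θstar‖) :
    μ * R ^ 2 / 4 ≤ L θ - L θstar ∧ μ * R / 2 ≤ ‖grad θ‖ := by
  set r := ‖θ - θstar‖
  have hr : 0 < r := hR.trans hfar
  set v := (R / r) • (θ - θstar)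
  have hv : ‖v‖ = R := by
    rw [norm_smul, Real.norm_of_nonneg (by positivity), div_mul_cancel₀ _ hr.ne']
  -- `θ` lies beyond the sphere point `θstar + v` on the ray from `θstar`
  set w := (r / R - 1) • v
  have hθ : θstar + v + w = θ := by
    simp only [w, v]
    match_scalars <;> field_simp <;> ring
  have hcurv : ∀ t ∈ Icc (0 : ℝ) 1, μ * R ^ 2 / 2 ≤
      ⟪v, toEuclideanLin (hess (θstar + t • v)) v⟫_ℝ := fun t ht ↦ by
    have := h.le_hess_add θstar ((norm_smul_le_of_mem_Icc v ht).trans hv.le) v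
    have := hμ v
    rw [hv] at this
    linarith
  have hconv : ∀ t ∈ Icc (0 : ℝ) 1, 0 ≤ ⟪w, toEuclideanLin (hess (θstar + v + t • w)) w⟫_ℝ :=
    fun t _ ↦ (hpd _).posSemidef.inner_toEuclideanLin_nonneg w
  have h1 := le_apply_add_of_le_hess hgrad hhess hcurv
  have h2 := add_le_inner_grad_add_of_le_hess hhess hcurv
  have h3 := le_apply_add_of_le_hess hgrad hhess hconv
  have h4 := add_le_inner_grad_add_of_le_hess hhess hconv
  rw [hθ] at h3 h4
  rw [hstar, inner_zero_left] at h1 h2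
  simp only [w, inner_smul_right] at h3 h4
  have hscale : 0 < r / R - 1 := by rw [sub_pos, one_lt_div hR]; exact hfar
  have hsphere : 0 ≤ ⟪grad (θstar + v), v⟫_ℝ := by nlinarith
  constructor
  · nlinarith [mul_nonneg hscale.le hsphere]
  · have h5 : μ * R ^ 2 / 2 ≤ ⟪grad θ, v⟫_ℝ := by nlinarith
    have h6 : ⟪grad θ, v⟫_ℝ ≤ ‖grad θ‖ * R := hv ▸ real_inner_le_norm _ _
    exact le_of_mul_le_mul_right (by linarith) hR

lemma sub_le_inner_inv (h : HessianComparableWithin hess R)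
    (hgrad : ∀ θ, HasGradientAt L (grad θ) θ)
    (hhess : ∀ θ, HasFDerivAt grad (toEuclideanLin (hess θ)).toContinuousLinearMap θ)
    (hpd : ∀ θ, (hess θ).PosDef) (hclose : ‖θ - θstar‖ ≤ R) :
    L θ - L θstar ≤ ⟪grad θ, toEuclideanLin (hess θ)⁻¹ (grad θ)⟫_ℝ := by
  set v := θstar - θ
  have hv : ‖v‖ ≤ R := by rwa [norm_sub_rev]
  have hcurv : ∀ t ∈ Icc (0 : ℝ) 1, ⟪v, toEuclideanLin (hess θ) v⟫_ℝ / 2 ≤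
      ⟪v, toEuclideanLin (hess (θ + t • v)) v⟫_ℝ := fun t ht ↦ by
    linarith [h.le_hess_add θ ((norm_smul_le_of_mem_Icc v ht).trans hv) v]
  have h1 := le_apply_add_of_le_hess hgrad hhess hcurv
  rw [add_sub_cancel] at h1
  linarith [(hpd θ).neg_inner_inv_le (grad θ) v]

lemma mul_one_sub_mul_inner_inv_le (h : HessianComparableWithin hess R)
    (hgrad : ∀ θ, HasGradientAt L (grad θ) θ)
    (hhess : ∀ θ, HasFDerivAt grad (toEuclideanLin (hess θ)).toContinuousLinearMap θ)
    (hpd : ∀ θ, (hess θ).PosDef) (hmin : ∀ θ, L θstar ≤ L θ) {s : ℝ} (hs : 0 ≤ s)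
    (hsR : s * ‖toEuclideanLin (hess θ)⁻¹ (grad θ)‖ ≤ R) :
    s * (1 - s) * ⟪grad θ, toEuclideanLin (hess θ)⁻¹ (grad θ)⟫_ℝ ≤ L θ - L θstar := by
  set w := toEuclideanLin (hess θ)⁻¹ (grad θ)
  set v := -(s • w)
  have hv : ‖v‖ ≤ R := by rwa [norm_neg, norm_smul, Real.norm_of_nonneg hs]
  have hcurv : ∀ t ∈ Icc (0 : ℝ) 1, ⟪v, toEuclideanLin (hess (θ + t • v)) v⟫_ℝ ≤
      2 * ⟪v, toEuclideanLin (hess θ) v⟫_ℝ := fun t ht ↦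
    h.hess_add_le θ ((norm_smul_le_of_mem_Icc v ht).trans hv) v
  have h1 := apply_add_le_of_hess_le hgrad hhess hcurv
  have hquad : ⟪v, toEuclideanLin (hess θ) v⟫_ℝ = s ^ 2 * ⟪grad θ, w⟫_ℝ := by
    rw [(hpd θ).inner_inv_eq]
    simp only [v, map_neg, map_smul, inner_neg_left, inner_neg_right, inner_smul_left,
      inner_smul_right, conj_trivial]
    ring
  rw [hquad, inner_neg_right, inner_smul_right] at h1
  nlinarith [hmin (θ + v)]

lemma norm_inv_apply_grad_le (h : HessianComparableWithin hess R)
    (hgrad : ∀ θ, HasGradientAt L (grad θ) θ)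
    (hhess : ∀ θ, HasFDerivAt grad (toEuclideanLin (hess θ)).toContinuousLinearMap θ)
    (hpd : ∀ θ, (hess θ).PosDef) (hmin : ∀ θ, L θstar ≤ L θ) (hμ : 0 < μ) (hR : 0 < R)
    (hdecr : μ / 2 * ‖toEuclideanLin (hess θ)⁻¹ (grad θ)‖ ^ 2 ≤
      ⟪grad θ, toEuclideanLin (hess θ)⁻¹ (grad θ)⟫_ℝ)
    (hsmall : L θ - L θstar ≤ μ * R ^ 2 / 16 ∨ ‖grad θ‖ ≤ R * μ / 4) :
    ‖toEuclideanLin (hess θ)⁻¹ (grad θ)‖ ≤ 2 * R := by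
  set w := toEuclideanLin (hess θ)⁻¹ (grad θ)
  rcases hsmall with hgap | hgrad_small
  · by_contra! hw
    have hw0 : 0 < ‖w‖ := by linarith
    set s := R / ‖w‖
    have hsw : s * ‖w‖ = R := div_mul_cancel₀ _ hw0.ne'
    have hs0 : 0 < s := by positivity
    have hs : s ≤ 1 / 2 := by rw [div_le_iff₀ hw0]; linarith
    have hdescent := h.mul_one_sub_mul_inner_inv_le hgrad hhess hpd hmin hs0.le hsw.le
    -- a step of length `R` already decreases `L` by more than `μ R ^ 2 / 16`
    have h1 : μ / 2 * R * ‖w‖ ≤ s * ⟪grad θ, w⟫_ℝ := by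
      rw [← hsw]; nlinarith [mul_le_mul_of_nonneg_left hdecr hs0.le]
    have h2 : s / 2 * ⟪grad θ, w⟫_ℝ ≤ s * (1 - s) * ⟪grad θ, w⟫_ℝ :=
      mul_le_mul_of_nonneg_right (by nlinarith) (by nlinarith)
    nlinarith [mul_lt_mul_of_pos_left hw (mul_pos hμ hR)]
  · by_contra! hw
    have h1 := real_inner_le_norm (grad θ) w
    have h2 := mul_le_mul_of_nonneg_right hgrad_small (norm_nonneg w)
    have h3 : 0 < μ * ‖w‖ * (2 * ‖w‖ - R) := mul_pos (mul_pos hμ (by linarith)) (by linarith)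
    nlinarith

end HessianComparableWithin

end NewtonDecrement

theorem sophia_small_loss_or_gradient_imply_loss_approx_general
    (d : ℕ)
    (L : EuclideanSpace ℝ (Fin d) → ℝ)
    (grad : EuclideanSpace ℝ (Fin d) → EuclideanSpace ℝ (Fin d))
    (hess : EuclideanSpace ℝ (Fin d) → Matrix (Fin d) (Fin d) ℝ)
    (hgrad : ∀ θ, HasGradientAt L (grad θ) θ)
    (hhess : ∀ θ, HasFDerivAt grad ((Matrix.toEuclideanLin (hess θ)).toContinuousLinearMap) θ)
    (hpd : ∀ θ, (hess θ).PosDef)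
    (θstar : EuclideanSpace ℝ (Fin d))
    (hmin : ∀ θ, L θstar ≤ L θ)
    (μ : ℝ)
    (hμ : IsLeast {c : ℝ | ∃ v : EuclideanSpace ℝ (Fin d), ‖v‖ = 1 ∧
      Matrix.toEuclideanLin (hess θstar) v = c • v} μ)
    (R : ℝ) (hR : 0 < R)
    (hhessLip : ∀ θ θ' : EuclideanSpace ℝ (Fin d), ‖θ - θ'‖ ≤ R →
      ‖(Matrix.toEuclideanLin ((hess θ')⁻¹ * hess θ)).toContinuousLinearMap‖ ≤ 2)
    (θ : EuclideanSpace ℝ (Fin d))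
    (hsmall : L θ - L θstar ≤ μ * R ^ 2 / 16 ∨ ‖grad θ‖ ≤ R * μ / 4) :
    L θ - L θstar ≤ inner (𝕜 := ℝ) (grad θ) (Matrix.toEuclideanLin (hess θ)⁻¹ (grad θ)) ∧
    inner (𝕜 := ℝ) (grad θ) (Matrix.toEuclideanLin (hess θ)⁻¹ (grad θ)) ≤
      4 * (L θ - L θstar) := by
  have hcomp : HessianComparableWithin hess R := fun θ θ' h ↦
    inner_toEuclideanLin_le_mul_of_opNorm_inv_mul_le (hpd θ).1 (hpd θ') (hhessLip θ θ' h)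
  have hstar : grad θstar = 0 := (hgrad θstar).eq_zero_of_isLocalMin (.of_forall hmin)
  have hμlow : ∀ v, μ * ‖v‖ ^ 2 ≤ ⟪v, toEuclideanLin (hess θstar) v⟫_ℝ :=
    (hpd θstar).1.mul_norm_sq_le_inner_toEuclideanLin fun c hc ↦
      hμ.2 (exists_norm_eq_one_of_mem_spectrum hc)
  have hμpos : 0 < μ := by
    obtain ⟨v, hv1, hv⟩ := hμ.1
    have := (hpd θstar).inner_toEuclideanLin_pos (x := v) (by rintro rfl; simp at hv1)
    rwa [hv, inner_smul_right, real_inner_self_eq_norm_sq, hv1, one_pow, mul_one] at this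
  have hclose : ‖θ - θstar‖ ≤ R := by
    by_contra! hfar
    obtain ⟨hgap, hgrad_large⟩ := hcomp.gap_and_norm_grad_lower_bounds_of_lt_norm_sub hgrad hhess
      hpd hstar hμlow hμpos.le hR hfar
    rcases hsmall with h | h <;> nlinarith [mul_pos hμpos hR]
  have hdecr : μ / 2 * ‖toEuclideanLin (hess θ)⁻¹ (grad θ)‖ ^ 2 ≤
      ⟪grad θ, toEuclideanLin (hess θ)⁻¹ (grad θ)⟫_ℝ := by
    rw [(hpd θ).inner_inv_eq]
    linarith [hμlow (toEuclideanLin (hess θ)⁻¹ (grad θ)),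
      hcomp θstar θ (by rwa [norm_sub_rev]) (toEuclideanLin (hess θ)⁻¹ (grad θ))]
  have hstep := hcomp.norm_inv_apply_grad_le hgrad hhess hpd hmin hμpos hR hdecr hsmall
  refine ⟨hcomp.sub_le_inner_inv hgrad hhess hpd hclose, ?_⟩
  linarith [hcomp.mul_one_sub_mul_inner_inv_le hgrad hhess hpd hmin (θ := θ) (s := 1 / 2)
    (by norm_num) (by linarith)]

/-- Small loss or small gradient implies the Newton decrement approximates the loss gap. -/
theorem sophia_small_loss_or_gradient_imply_loss_approx
    (d : ℕ)
    (L : EuclideanSpace ℝ (Fin d) → ℝ)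
    (grad : EuclideanSpace ℝ (Fin d) → EuclideanSpace ℝ (Fin d))
    (hess : EuclideanSpace ℝ (Fin d) → Matrix (Fin d) (Fin d) ℝ)
    (hC2 : ContDiff ℝ 2 L)
    (hgrad : ∀ θ, HasGradientAt L (grad θ) θ)
    (hhess : ∀ θ, HasFDerivAt grad ((Matrix.toEuclideanLin (hess θ)).toContinuousLinearMap) θ)
    (hconv : StrictConvexOn ℝ Set.univ L)
    (hpd : ∀ θ, (hess θ).PosDef)
    (θstar : EuclideanSpace ℝ (Fin d))
    (hmin : ∀ θ, L θstar ≤ L θ)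
    (μ : ℝ)
    (hμ : IsLeast {c : ℝ | ∃ v : EuclideanSpace ℝ (Fin d), ‖v‖ = 1 ∧
      Matrix.toEuclideanLin (hess θstar) v = c • v} μ)
    (R : ℝ) (hR : 0 < R)
    (hhessLip : ∀ θ θ' : EuclideanSpace ℝ (Fin d), ‖θ - θ'‖ ≤ R →
      ‖(Matrix.toEuclideanLin ((hess θ')⁻¹ * hess θ)).toContinuousLinearMap‖ ≤ 2)
    (θ : EuclideanSpace ℝ (Fin d))
    (hsmall : L θ - L θstar ≤ μ * R ^ 2 / 16 ∨ ‖grad θ‖ ≤ R * μ / 4) :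
    L θ - L θstar ≤ inner (𝕜 := ℝ) (grad θ) (Matrix.toEuclideanLin (hess θ)⁻¹ (grad θ)) ∧
    inner (𝕜 := ℝ) (grad θ) (Matrix.toEuclideanLin (hess θ)⁻¹ (grad θ)) ≤
      4 * (L θ - L θstar) :=
  sophia_small_loss_or_gradient_imply_loss_approx_general d L grad hess hgrad hhess hpd θstar hmin μ
    hμ R hR hhessLip θ hsmall
end
end

section
/- Under the assumptions of strict convexity, minimizer θ*, μ = λ_min(∇²L(θ*)), and multiplicative Hessian continuity at scale R: for any θ with L(θ) - min L ≤ μR²/16, the Newton step is bounded: ‖(∇²L(θ))⁻¹ ∇L(θ)‖₂ ≤ sqrt(8(L(θ) - min L)/μ). -/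
open scoped InnerProductSpace
open Matrix
noncomputable section
open Set

/-!
Write `H x` for the Hessian, `δ = L θ - L θ*` and `N = H(θ)⁻¹ ∇L θ`. For `‖x - y‖ ≤ R`, the
matrix `H(y)⁻¹ H(x)` is conjugate to the symmetric matrix `S⁻¹ H(x) S⁻¹` with `S² = H(y)`, whose
norm is therefore its spectral radius, at most 2: this is the Loewner bound `H(x) ≤ 2 H(y)`.
Hence `L` grows at least like `μ‖x - θ*‖²/4` on the `R`-ball around `θ*`, and by convexity
`δ ≤ μR²/16` forces `θ` into that ball. The mean value inequality for `H(θ)⁻¹ ∇L` on `[θ*, θ]`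
gives `‖N‖ ≤ 2‖θ - θ*‖`, so along the half Newton step `θ - N/2` we still have `H ≤ 2 H(θ)`,
and comparing `L θ*` with `L (θ - N/2)` yields `⟪∇L θ, N⟫ ≤ 4δ`. Finally
`μ‖N‖² ≤ ⟪H(θ*) N, N⟫ ≤ 2 ⟪H(θ) N, N⟫ = 2 ⟪∇L θ, N⟫ ≤ 8δ`.
-/

theorem le_image_one_of_le_deriv2 {f f' f'' : ℝ → ℝ} (hf : ∀ t, HasDerivAt f (f' t) t)
    (hf' : ∀ t, HasDerivAt f' (f'' t) t) {c : ℝ} (hc : ∀ t ∈ Icc (0 : ℝ) 1, c ≤ f'' t) :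
    f 0 + f' 0 + c / 2 ≤ f 1 := by
  have mono {g g' : ℝ → ℝ} (hg : ∀ t, HasDerivAt g (g' t) t)
      (hg' : ∀ t ∈ Icc (0 : ℝ) 1, 0 ≤ g' t) : MonotoneOn g (Icc 0 1) :=
    monotoneOn_of_hasDerivWithinAt_nonneg (convex_Icc 0 1)
      (fun t _ ↦ (hg t).continuousAt.continuousWithinAt) (fun t _ ↦ (hg t).hasDerivWithinAt)
      (fun t ht ↦ hg' t (interior_subset ht))
  have h0 : (0 : ℝ) ∈ Icc (0 : ℝ) 1 := left_mem_Icc.2 zero_le_one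
  have hf'_mono : MonotoneOn (fun t ↦ f' t - c * t) (Icc 0 1) :=
    mono (fun t ↦ (hf' t).sub (by simpa using (hasDerivAt_id t).const_mul c))
      (fun t ht ↦ sub_nonneg.2 (hc t ht))
  have hf_mono : MonotoneOn (fun t ↦ f t - f' 0 * t - c * t ^ 2 / 2) (Icc 0 1) := by
    refine mono (g' := fun t ↦ f' t - f' 0 - c * t) (fun t ↦ ?_) (fun t ht ↦ ?_)
    · refine (((hf t).sub ((hasDerivAt_id t).const_mul (f' 0))).sub
        (((hasDerivAt_pow 2 t).const_mul c).div_const 2)).congr_deriv ?_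
      simp only [Nat.cast_ofNat, mul_one]
      ring
    · have := hf'_mono h0 ht ht.1
      simp only [mul_zero, sub_zero] at this
      linarith
  have := hf_mono h0 (right_mem_Icc.2 zero_le_one) zero_le_one
  norm_num at this
  linarith

theorem image_one_le_of_deriv2_le {f f' f'' : ℝ → ℝ} (hf : ∀ t, HasDerivAt f (f' t) t)
    (hf' : ∀ t, HasDerivAt f' (f'' t) t) {C : ℝ} (hC : ∀ t ∈ Icc (0 : ℝ) 1, f'' t ≤ C) :
    f 1 ≤ f 0 + f' 0 + C / 2 := by
  have := le_image_one_of_le_deriv2 (fun t ↦ (hf t).neg) (fun t ↦ (hf' t).neg)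
    (c := -C) (fun t ht ↦ neg_le_neg (hC t ht))
  simp only [Pi.neg_apply] at this
  linarith

theorem LinearMap.IsSymmetric.mul_norm_sq_le_inner_self {E : Type*} [NormedAddCommGroup E]
    [InnerProductSpace ℝ E] [FiniteDimensional ℝ E] {T : E →ₗ[ℝ] E} (hT : T.IsSymmetric)
    {μ : ℝ} (hμ : μ ∈ lowerBounds {c | ∃ v : E, ‖v‖ = 1 ∧ T v = c • v}) (x : E) :
    μ * ‖x‖ ^ 2 ≤ ⟪T x, x⟫_ℝ := by
  rcases eq_or_ne x 0 with rfl | hx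
  · simp
  have : Nontrivial E := ⟨⟨x, 0, hx⟩⟩
  obtain ⟨v, hv⟩ := hT.hasEigenvalue_iInf_of_finiteDimensional.exists_hasEigenvector
  have hμc : μ ≤ ⨅ y : {y : E // y ≠ 0}, ⟪T y, y⟫_ℝ / ‖(y : E)‖ ^ 2 :=
    hμ ⟨‖v‖⁻¹ • v, norm_smul_inv_norm hv.2, by rw [map_smul, hv.apply_eq_smul, smul_comm]; rfl⟩
  have hbdd : BddBelow
      (Set.range fun y : {y : E // y ≠ 0} ↦ RCLike.re ⟪T y, y⟫_ℝ / ‖(y : E)‖ ^ 2) := by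
    refine ⟨-‖LinearMap.toContinuousLinearMap T‖, ?_⟩
    rintro _ ⟨y, rfl⟩
    exact neg_le_of_abs_le ((LinearMap.toContinuousLinearMap T).rayleighQuotient_le_norm y)
  have hcx := ciInf_le hbdd ⟨x, hx⟩
  rw [le_div_iff₀ (by positivity)] at hcx
  simp only [RCLike.re_to_real] at hcx
  nlinarith [sq_nonneg ‖x‖]

theorem Matrix.PosDef.pos_of_toEuclideanCLM_eq_smul {n : Type*} [Fintype n] [DecidableEq n]
    {A : Matrix n n ℝ} (hA : A.PosDef) {v : EuclideanSpace ℝ n} (hv : v ≠ 0) {c : ℝ}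
    (hAv : toEuclideanCLM (𝕜 := ℝ) A v = c • v) : 0 < c := by
  have hpos := hA.dotProduct_mulVec_pos (x := WithLp.ofLp v) (by simpa using hv)
  rw [star_trivial, ← inner_toEuclideanCLM, hAv, real_inner_smul_right] at hpos
  exact pos_of_mul_pos_left hpos real_inner_self_nonneg

theorem Matrix.IsHermitian.norm_toEuclideanCLM_inv_mul_mul_inv_le {n : Type*} [Fintype n]
    [DecidableEq n] {S B : Matrix n n ℝ} (hS : S.IsHermitian) (hSu : IsUnit S)
    (hB : B.IsHermitian) :
    ‖toEuclideanCLM (𝕜 := ℝ) (S⁻¹ * B * S⁻¹)‖ ≤ ‖toEuclideanCLM (𝕜 := ℝ) ((S * S)⁻¹ * B)‖ := by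
  rcases subsingleton_or_nontrivial (EuclideanSpace ℝ n) with _ | _
  · simp [Subsingleton.elim (toEuclideanCLM (𝕜 := ℝ) (S⁻¹ * B * S⁻¹)) 0]
  have hSS' : S * S⁻¹ = 1 := mul_nonsing_inv S ((isUnit_iff_isUnit_det S).1 hSu)
  let u := (hSu.map (toEuclideanCLM (n := n) (𝕜 := ℝ))).unit
  set M := toEuclideanCLM (𝕜 := ℝ) (S⁻¹ * B * S⁻¹)
  set T := toEuclideanCLM (𝕜 := ℝ) ((S * S)⁻¹ * B)
  have hM_conj : M = u * T * ↑u⁻¹ := by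
    have hu_inv : (↑u⁻¹ : EuclideanSpace ℝ n →L[ℝ] EuclideanSpace ℝ n) =
        toEuclideanCLM (𝕜 := ℝ) S⁻¹ :=
      Units.inv_eq_of_mul_eq_one_right (by simp [u, ← map_mul, hSS'])
    rw [hu_inv, IsUnit.unit_spec, ← map_mul, ← map_mul, Matrix.mul_inv_rev]
    simp only [M, Matrix.mul_assoc]
    rw [← Matrix.mul_assoc S S⁻¹, hSS', Matrix.one_mul]
  have hM_sa : IsSelfAdjoint M := by
    have := isHermitian_mul_mul_conjTranspose S⁻¹ hB
    rw [hS.inv.eq] at this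
    exact IsSelfAdjoint.map (show IsSelfAdjoint (S⁻¹ * B * S⁻¹) from this) _
  have h_conj : spectralRadius ℝ M = spectralRadius ℝ T := by
    rw [hM_conj, spectralRadius, spectrum.units_conjugate, spectralRadius]
  have h_le := spectrum.spectralRadius_le_nnnorm (𝕜 := ℝ) T
  rw [← h_conj, ContinuousLinearMap.spectralRadius_eq_nnnorm M hM_sa, ENNReal.coe_le_coe] at h_le
  exact NNReal.coe_le_coe.2 h_le

open scoped MatrixOrder in
theorem Matrix.PosDef.inner_toEuclideanCLM_le_of_norm_inv_mul_le {n : Type*} [Fintype n]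
    [DecidableEq n] {A B : Matrix n n ℝ} (hA : A.PosDef) (hB : B.IsHermitian) {c : ℝ}
    (h : ‖toEuclideanCLM (𝕜 := ℝ) (A⁻¹ * B)‖ ≤ c) (v : EuclideanSpace ℝ n) :
    ⟪toEuclideanCLM (𝕜 := ℝ) B v, v⟫_ℝ ≤ c * ⟪toEuclideanCLM (𝕜 := ℝ) A v, v⟫_ℝ := by
  set S := CFC.sqrt A
  have hSS : S * S = A := CFC.sqrt_mul_sqrt_self A hA.posSemidef.nonneg
  have hS : S.IsHermitian := (CFC.sqrt_nonneg A).posSemidef.isHermitian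
  have hSu : IsUnit S := (CFC.isUnit_sqrt_iff A hA.posSemidef.nonneg).2 hA.isUnit
  set s := toEuclideanCLM (𝕜 := ℝ) S
  set M := toEuclideanCLM (𝕜 := ℝ) (S⁻¹ * B * S⁻¹)
  have hM : ‖M‖ ≤ c := by
    have := hS.norm_toEuclideanCLM_inv_mul_mul_inv_le hSu hB
    rw [hSS] at this
    exact this.trans h
  have hs : IsSelfAdjoint s := IsSelfAdjoint.map (show IsSelfAdjoint S from hS) _
  have hB_eq : toEuclideanCLM (𝕜 := ℝ) B v = s (M (s v)) := by
    have hdet := (isUnit_iff_isUnit_det S).1 hSu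
    change toEuclideanCLM (𝕜 := ℝ) B v = (s * M * s) v
    rw [← map_mul, ← map_mul, Matrix.mul_assoc, Matrix.mul_assoc, nonsing_inv_mul S hdet,
      Matrix.mul_one, ← Matrix.mul_assoc, mul_nonsing_inv S hdet, Matrix.one_mul]
  have hA_eq : toEuclideanCLM (𝕜 := ℝ) A v = s (s v) := by
    change toEuclideanCLM (𝕜 := ℝ) A v = (s * s) v
    rw [← map_mul, hSS]
  calc ⟪toEuclideanCLM (𝕜 := ℝ) B v, v⟫_ℝ = ⟪M (s v), s v⟫_ℝ := by
        rw [hB_eq]; exact hs.isSymmetric _ _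
    _ ≤ ‖M‖ * ‖s v‖ ^ 2 := by
      rw [sq, ← mul_assoc]
      exact (real_inner_le_norm _ _).trans (by gcongr; exact M.le_opNorm _)
    _ ≤ c * ‖s v‖ ^ 2 := by gcongr
    _ = c * ⟪toEuclideanCLM (𝕜 := ℝ) A v, v⟫_ℝ := by
      rw [hA_eq, ← real_inner_self_eq_norm_sq]; exact congrArg _ (hs.isSymmetric _ _).symm

theorem Matrix.toEuclideanCLM_apply_toEuclideanCLM_inv {n : Type*} [Fintype n] [DecidableEq n]
    {A : Matrix n n ℝ} (hA : IsUnit A.det) (x : EuclideanSpace ℝ n) :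
    toEuclideanCLM (𝕜 := ℝ) A (toEuclideanCLM (𝕜 := ℝ) A⁻¹ x) = x := by
  change (toEuclideanCLM (𝕜 := ℝ) A * toEuclideanCLM (𝕜 := ℝ) A⁻¹) x = x
  rw [← map_mul, mul_nonsing_inv _ hA, map_one]
  rfl

section Newton

variable {F : Type*} [NormedAddCommGroup F] [InnerProductSpace ℝ F]
  {L : F → ℝ} {grad : F → F} {H : F → F →L[ℝ] F}

theorem hasDerivAt_inner_comp_add_smul (hH : ∀ x, HasFDerivAt grad (H x) x) (a v : F) (t : ℝ) :
    HasDerivAt (fun s : ℝ ↦ ⟪grad (a + s • v), v⟫_ℝ) ⟪H (a + t • v) v, v⟫_ℝ t := by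
  have hline : HasDerivAt (fun s : ℝ ↦ a + s • v) v t := by
    simpa using ((hasDerivAt_id t).smul_const v).const_add a
  simpa using ((hH (a + t • v)).comp_hasDerivAt t hline).inner ℝ (hasDerivAt_const t v)

theorem norm_apply_grad_le_of_norm_comp_le (hH : ∀ x, HasFDerivAt grad (H x) x) {x₀ x : F}
    (hx₀ : grad x₀ = 0) {P : F →L[ℝ] F} {K : ℝ}
    (hPH : ∀ z, ‖z - x‖ ≤ ‖x - x₀‖ → ‖P ∘L H z‖ ≤ K) : ‖P (grad x)‖ ≤ K * ‖x - x₀‖ := by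
  have hseg : segment ℝ x₀ x ⊆ Metric.closedBall x ‖x - x₀‖ :=
    (convex_closedBall x _).segment_subset (by simp [dist_eq_norm, norm_sub_rev])
      (Metric.mem_closedBall_self (norm_nonneg _))
  simpa [hx₀] using (convex_segment x₀ x).norm_image_sub_le_of_norm_hasFDerivWithin_le
    (fun z _ ↦ (P.hasFDerivAt.comp z (hH z)).hasFDerivWithinAt)
    (fun z hz ↦ hPH z (by simpa [dist_eq_norm] using hseg hz))
    (left_mem_segment ℝ x₀ x) (right_mem_segment ℝ x₀ x)

variable [CompleteSpace F]

theorem HasGradientAt.eq_zero_of_isLocalMin_s6 {g x : F} (h : HasGradientAt L g x)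
    (hx : IsLocalMin L x) : g = 0 :=
  (InnerProductSpace.toDual ℝ F).map_eq_zero_iff.1 (hx.hasFDerivAt_eq_zero h.hasFDerivAt)

theorem hasDerivAt_comp_add_smul_of_hasGradientAt (hgrad : ∀ x, HasGradientAt L (grad x) x)
    (a v : F) (t : ℝ) :
    HasDerivAt (fun s : ℝ ↦ L (a + s • v)) ⟪grad (a + t • v), v⟫_ℝ t := by
  have hline : HasDerivAt (fun s : ℝ ↦ a + s • v) v t := by
    simpa using ((hasDerivAt_id t).smul_const v).const_add a
  simpa [Function.comp_def] using (hgrad (a + t • v)).hasFDerivAt.comp_hasDerivAt t hline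

theorem add_inner_add_le_of_le_inner_hessian (hgrad : ∀ x, HasGradientAt L (grad x) x)
    (hH : ∀ x, HasFDerivAt grad (H x) x) {a v : F} {c : ℝ}
    (hc : ∀ t ∈ Icc (0 : ℝ) 1, c ≤ ⟪H (a + t • v) v, v⟫_ℝ) :
    L a + ⟪grad a, v⟫_ℝ + c / 2 ≤ L (a + v) := by
  simpa using le_image_one_of_le_deriv2 (hasDerivAt_comp_add_smul_of_hasGradientAt hgrad a v)
    (hasDerivAt_inner_comp_add_smul hH a v) hc

theorem le_add_inner_add_of_inner_hessian_le (hgrad : ∀ x, HasGradientAt L (grad x) x)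
    (hH : ∀ x, HasFDerivAt grad (H x) x) {a v : F} {C : ℝ}
    (hC : ∀ t ∈ Icc (0 : ℝ) 1, ⟪H (a + t • v) v, v⟫_ℝ ≤ C) :
    L (a + v) ≤ L a + ⟪grad a, v⟫_ℝ + C / 2 := by
  simpa using image_one_le_of_deriv2_le (hasDerivAt_comp_add_smul_of_hasGradientAt hgrad a v)
    (hasDerivAt_inner_comp_add_smul hH a v) hC

theorem norm_sub_le_of_sub_lt_of_le_inner_hessian (hconv : ConvexOn ℝ univ L)
    (hgrad : ∀ x, HasGradientAt L (grad x) x) (hH : ∀ x, HasFDerivAt grad (H x) x)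
    {x₀ x : F} (hmin : ∀ y, L x₀ ≤ L y) {m R : ℝ} (hR : 0 < R)
    (hm : ∀ y, ‖y - x₀‖ ≤ R → ∀ w, m * ‖w‖ ^ 2 ≤ ⟪H y w, w⟫_ℝ)
    (hloss : L x - L x₀ < m * R ^ 2 / 2) : ‖x - x₀‖ ≤ R := by
  by_contra! hfar
  have hx₀ : grad x₀ = 0 := (hgrad x₀).eq_zero_of_isLocalMin_s6 (.of_forall hmin)
  have hd : 0 < ‖x - x₀‖ := hR.trans hfar
  set τ := R / ‖x - x₀‖
  have hτ0 : 0 < τ := div_pos hR hd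
  have hτ1 : τ < 1 := (div_lt_one hd).2 hfar
  have hw : ‖τ • (x - x₀)‖ = R := by
    rw [norm_smul, Real.norm_of_nonneg hτ0.le, div_mul_cancel₀ _ hd.ne']
  have hgrowth : L x₀ + m * R ^ 2 / 2 ≤ L (x₀ + τ • (x - x₀)) := by
    have := add_inner_add_le_of_le_inner_hessian hgrad hH (c := m * R ^ 2) fun t ht ↦ by
      have hy : ‖x₀ + t • τ • (x - x₀) - x₀‖ ≤ R := by
        rw [add_sub_cancel_left, norm_smul, hw, Real.norm_of_nonneg ht.1]
        nlinarith [ht.2]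
      have := hm _ hy (τ • (x - x₀))
      rwa [hw] at this
    simpa [hx₀] using this
  have hconvex := hconv.2 (mem_univ x₀) (mem_univ x) (sub_nonneg.2 hτ1.le) hτ0.le (by ring)
  have hseg : (1 - τ) • x₀ + τ • x = x₀ + τ • (x - x₀) := by
    rw [smul_sub, sub_smul, one_smul]
    abel
  rw [hseg, smul_eq_mul, smul_eq_mul] at hconvex
  nlinarith [hmin x]

theorem inner_grad_le_four_mul_sub (hgrad : ∀ x, HasGradientAt L (grad x) x)
    (hH : ∀ x, HasFDerivAt grad (H x) x) {x₀ x N : F} (hmin : ∀ y, L x₀ ≤ L y)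
    (hN : H x N = grad x)
    (hHN : ∀ y, ‖y - x‖ ≤ ‖N‖ / 2 → ∀ w, ⟪H y w, w⟫_ℝ ≤ 2 * ⟪H x w, w⟫_ℝ) :
    ⟪grad x, N⟫_ℝ ≤ 4 * (L x - L x₀) := by
  set w : F := -(1 / 2 : ℝ) • N
  have hquad : ⟪H x w, w⟫_ℝ = ⟪grad x, N⟫_ℝ / 4 := by
    simp only [w, map_smul, hN, real_inner_smul_left, real_inner_smul_right]
    ring
  have hgw : ⟪grad x, w⟫_ℝ = -(⟪grad x, N⟫_ℝ / 2) := by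
    simp only [w, real_inner_smul_right]
    ring
  have := le_add_inner_add_of_inner_hessian_le hgrad hH (a := x) (v := w)
    (C := ⟪grad x, N⟫_ℝ / 2) fun t ht ↦ by
      have hy : ‖x + t • w - x‖ ≤ ‖N‖ / 2 := by
        rw [add_sub_cancel_left, norm_smul, norm_smul, Real.norm_of_nonneg ht.1]
        norm_num
        nlinarith [ht.2, norm_nonneg N]
      linarith [hHN _ hy w]
  linarith [hmin (x + w)]

end Newton

theorem sophia_small_loss_imply_no_clipping_general
    (d : ℕ)
    (L : EuclideanSpace ℝ (Fin d) → ℝ)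
    (grad : EuclideanSpace ℝ (Fin d) → EuclideanSpace ℝ (Fin d))
    (hess : EuclideanSpace ℝ (Fin d) → Matrix (Fin d) (Fin d) ℝ)
    (hgrad : ∀ θ, HasGradientAt L (grad θ) θ)
    (hhess : ∀ θ, HasFDerivAt grad ((Matrix.toEuclideanLin (hess θ)).toContinuousLinearMap) θ)
    (hconv : StrictConvexOn ℝ Set.univ L)
    (hpd : ∀ θ, (hess θ).PosDef)
    (θstar : EuclideanSpace ℝ (Fin d))
    (hmin : ∀ θ, L θstar ≤ L θ)
    (μ : ℝ)
    (hμ : IsLeast {c : ℝ | ∃ v : EuclideanSpace ℝ (Fin d), ‖v‖ = 1 ∧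
      Matrix.toEuclideanLin (hess θstar) v = c • v} μ)
    (R : ℝ) (hR : 0 < R)
    (hhessLip : ∀ θ θ' : EuclideanSpace ℝ (Fin d), ‖θ - θ'‖ ≤ R →
      ‖(Matrix.toEuclideanLin ((hess θ')⁻¹ * hess θ)).toContinuousLinearMap‖ ≤ 2)
    (θ : EuclideanSpace ℝ (Fin d))
    (hloss : L θ - L θstar ≤ μ * R ^ 2 / 16) :
    ‖Matrix.toEuclideanLin (hess θ)⁻¹ (grad θ)‖ ≤
      Real.sqrt (8 * (L θ - L θstar) / μ) := by
  let H : EuclideanSpace ℝ (Fin d) → _ := fun x ↦ toEuclideanCLM (𝕜 := ℝ) (hess x)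
  have hloewner : ∀ x y, ‖x - y‖ ≤ R → ∀ v, ⟪H x v, v⟫_ℝ ≤ 2 * ⟪H y v, v⟫_ℝ :=
    fun x y hxy ↦ (hpd y).inner_toEuclideanCLM_le_of_norm_inv_mul_le (hpd x).isHermitian
      (hhessLip x y hxy)
  have hμ_quad : ∀ w, μ * ‖w‖ ^ 2 ≤ ⟪H θstar w, w⟫_ℝ :=
    (isSymmetric_toEuclideanLin_iff.2 (hpd θstar).isHermitian).mul_norm_sq_le_inner_self hμ.2
  obtain ⟨v, hv1, hv⟩ := hμ.1
  have hμ_pos : 0 < μ := (hpd θstar).pos_of_toEuclideanCLM_eq_smul (by rintro rfl; simp at hv1) hv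
  have hclose : ‖θ - θstar‖ ≤ R :=
    norm_sub_le_of_sub_lt_of_le_inner_hessian (H := H) hconv.convexOn hgrad hhess hmin hR
      (m := μ / 2)
      (fun y hy w ↦ by linarith [hμ_quad w, hloewner θstar y (by rwa [norm_sub_rev]) w])
      (by nlinarith [mul_pos hμ_pos (pow_pos hR 2)])
  set N := toEuclideanLin (hess θ)⁻¹ (grad θ)
  have hN : ‖N‖ ≤ 2 * ‖θ - θstar‖ :=
    norm_apply_grad_le_of_norm_comp_le (H := H) (P := toEuclideanCLM (𝕜 := ℝ) (hess θ)⁻¹) hhess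
      ((hgrad θstar).eq_zero_of_isLocalMin_s6 (.of_forall hmin)) fun z hz ↦ by
        rw [← ContinuousLinearMap.mul_def, ← map_mul]
        exact hhessLip z θ (hz.trans hclose)
  have hHN : H θ N = grad θ :=
    toEuclideanCLM_apply_toEuclideanCLM_inv ((isUnit_iff_isUnit_det _).1 (hpd θ).isUnit) _
  have hdecr : ⟪grad θ, N⟫_ℝ ≤ 4 * (L θ - L θstar) :=
    inner_grad_le_four_mul_sub (H := H) hgrad hhess hmin hHN
      (fun y hy ↦ hloewner y θ (by linarith))
  have hμN : μ * ‖N‖ ^ 2 ≤ 2 * ⟪grad θ, N⟫_ℝ := by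
    simpa only [hHN] using (hμ_quad N).trans (hloewner θstar θ (by rwa [norm_sub_rev]) N)
  exact Real.le_sqrt_of_sq_le ((le_div_iff₀ hμ_pos).2 (by linarith))

/-- Small loss implies the Newton step is small (no clipping). -/
theorem sophia_small_loss_imply_no_clipping
    (d : ℕ)
    (L : EuclideanSpace ℝ (Fin d) → ℝ)
    (grad : EuclideanSpace ℝ (Fin d) → EuclideanSpace ℝ (Fin d))
    (hess : EuclideanSpace ℝ (Fin d) → Matrix (Fin d) (Fin d) ℝ)
    (hC2 : ContDiff ℝ 2 L)
    (hgrad : ∀ θ, HasGradientAt L (grad θ) θ)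
    (hhess : ∀ θ, HasFDerivAt grad ((Matrix.toEuclideanLin (hess θ)).toContinuousLinearMap) θ)
    (hconv : StrictConvexOn ℝ Set.univ L)
    (hpd : ∀ θ, (hess θ).PosDef)
    (θstar : EuclideanSpace ℝ (Fin d))
    (hmin : ∀ θ, L θstar ≤ L θ)
    (μ : ℝ)
    (hμ : IsLeast {c : ℝ | ∃ v : EuclideanSpace ℝ (Fin d), ‖v‖ = 1 ∧
      Matrix.toEuclideanLin (hess θstar) v = c • v} μ)
    (R : ℝ) (hR : 0 < R)
    (hhessLip : ∀ θ θ' : EuclideanSpace ℝ (Fin d), ‖θ - θ'‖ ≤ R →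
      ‖(Matrix.toEuclideanLin ((hess θ')⁻¹ * hess θ)).toContinuousLinearMap‖ ≤ 2)
    (θ : EuclideanSpace ℝ (Fin d))
    (hloss : L θ - L θstar ≤ μ * R ^ 2 / 16) :
    ‖Matrix.toEuclideanLin (hess θ)⁻¹ (grad θ)‖ ≤
      Real.sqrt (8 * (L θ - L θstar) / μ) :=
  sophia_small_loss_imply_no_clipping_general d L grad hess hgrad hhess hconv hpd θstar hmin μ hμ R
    hR hhessLip θ hloss
end
end

section
/- Lower bound for SignGD on quadratics: let L(θ) = (μ/2)θ₁² + (β/2)θ₂² on ℝ² with μ, β > 0. For any Δ, ε > 0, suppose there exist a learning rate η and a time T such that for every θ₀ with L(θ₀) ≤ Δ, the SignGD iteration θ_{t+1} = θ_t - η·sign(∇L(θ_t)) satisfies L(θ_{T-1}) ≤ ε and L(θ_T) ≤ ε. Then T ≥ (1/2)(sqrt(Δ/ε) - √2)·sqrt(β/μ). -/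
/-!
The SignGD iteration acts on each coordinate separately, moving it by `η` towards `0` unless it
is already `0` (`signStep`). Started at `(√(2Δ/μ), 0)`, the first coordinate loses at most `η` in
absolute value per step, so loss `ε` at time `T` forces `Tη ≥ √(2Δ/μ) - √(2ε/μ)`. Started at
`(0, y₀)` with `0 < y₀ ≤ η/2`, the second coordinate oscillates between `y₀` and `y₀ - η` and
never drops below `y₀` in absolute value, which forces `η ≤ 2√(2ε/β)`. Dividing the two bounds
gives `2T ≥ (√(Δ/ε) - 1)√(β/μ)`.
-/

noncomputable def signStep (η c x : ℝ) : ℝ := x - η * Real.sign (c * x)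

noncomputable def quadLoss (μ β x y : ℝ) : ℝ := μ / 2 * x ^ 2 + β / 2 * y ^ 2

section signStep

variable {η c : ℝ}

@[simp]
lemma signStep_zero : signStep η c 0 = 0 := by
  simp [signStep]

lemma signStep_of_pos (hc : 0 < c) {x : ℝ} (hx : 0 < x) : signStep η c x = x - η := by
  simp [signStep, Real.sign_of_pos (mul_pos hc hx)]

lemma signStep_of_neg (hc : 0 < c) {x : ℝ} (hx : x < 0) : signStep η c x = x + η := by
  simp [signStep, Real.sign_of_neg (mul_neg_of_pos_of_neg hc hx)]

/-- A step with `η ≤ 0` moves away from the origin, so only `η⁺` can shrink `|x|`. -/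
lemma abs_sub_posPart_le_abs_signStep (hc : 0 < c) (x : ℝ) :
    |x| - η⁺ ≤ |signStep η c x| := by
  have hη := le_posPart η
  have hη₀ := posPart_nonneg η
  rcases lt_trichotomy x 0 with hx | rfl | hx
  · rw [signStep_of_neg hc hx, abs_of_neg hx]
    rcases le_or_gt η 0 with hη' | hη'
    · rw [abs_of_neg (by linarith)]; linarith
    · linarith [neg_abs_le (x + η)]
  · simp [hη₀]
  · rw [signStep_of_pos hc hx, abs_of_pos hx]
    rcases le_or_gt η 0 with hη' | hη'
    · rw [abs_of_pos (by linarith)]; linarith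
    · linarith [le_abs_self (x - η)]

lemma abs_sub_mul_posPart_le_abs_signStep_iterate (hc : 0 < c) (x : ℝ) (t : ℕ) :
    |x| - t * η⁺ ≤ |(signStep η c)^[t] x| := by
  induction t with
  | zero => simp
  | succ t ih =>
    rw [Function.iterate_succ_apply']
    push_cast
    linarith [abs_sub_posPart_le_abs_signStep (η := η) hc ((signStep η c)^[t] x)]

lemma signStep_iterate_eq_or (hc : 0 < c) {y : ℝ} (hy : 0 < y) (hyη : y < η) (t : ℕ) :
    (signStep η c)^[t] y = y ∨ (signStep η c)^[t] y = y - η := by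
  induction t with
  | zero => exact .inl rfl
  | succ t ih =>
    rw [Function.iterate_succ_apply']
    rcases ih with h | h <;> rw [h]
    · exact .inr (signStep_of_pos hc hy)
    · exact .inl (by rw [signStep_of_neg hc (by linarith)]; ring)

lemma le_abs_signStep_iterate (hc : 0 < c) {y : ℝ} (hy : 0 < y) (hyη : 2 * y ≤ η) (t : ℕ) :
    y ≤ |(signStep η c)^[t] y| := by
  rcases signStep_iterate_eq_or hc hy (by linarith) t with h | h <;> rw [h]
  · exact le_abs_self y
  · rw [abs_of_neg (by linarith)]; linarith

end signStep

lemma abs_le_sqrt_of_quadLoss_le {μ β x y ε : ℝ} (hμ : 0 < μ) (hβ : 0 ≤ β)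
    (h : quadLoss μ β x y ≤ ε) : |x| ≤ √(2 * ε / μ) := by
  refine Real.abs_le_sqrt ?_
  rw [le_div_iff₀ hμ]
  unfold quadLoss at h
  nlinarith [mul_nonneg hβ (sq_nonneg y)]

lemma quadLoss_comm (μ β x y : ℝ) : quadLoss μ β x y = quadLoss β μ y x :=
  add_comm _ _

section lowerBound

variable {μ β η Δ ε : ℝ} {T : ℕ}

lemma sqrt_sub_sqrt_le_mul_posPart (hμ : 0 < μ) (hβ : 0 ≤ β) (hΔ : 0 ≤ Δ)
    (hconv : ∀ x y, quadLoss μ β x y ≤ Δ →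
      quadLoss μ β ((signStep η μ)^[T] x) ((signStep η β)^[T] y) ≤ ε) :
    √(2 * Δ / μ) - √(2 * ε / μ) ≤ T * η⁺ := by
  set x₀ := √(2 * Δ / μ)
  have hx₀ : quadLoss μ β x₀ 0 = Δ := by
    simp only [quadLoss, x₀, Real.sq_sqrt (by positivity : 0 ≤ 2 * Δ / μ)]
    field_simp
    ring
  have hfar := abs_sub_mul_posPart_le_abs_signStep_iterate (η := η) hμ x₀ T
  have hnear := abs_le_sqrt_of_quadLoss_le hμ hβ (hconv x₀ 0 hx₀.le)
  rw [abs_of_nonneg (Real.sqrt_nonneg _)] at hfar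
  linarith

lemma le_two_mul_sqrt_of_iterate_quadLoss_le (hμ : 0 ≤ μ) (hβ : 0 < β) (hη : 0 < η)
    (hΔ : 0 < Δ) (hεΔ : ε < Δ)
    (hconv : ∀ x y, quadLoss μ β x y ≤ Δ →
      quadLoss μ β ((signStep η μ)^[T] x) ((signStep η β)^[T] y) ≤ ε) :
    η ≤ 2 * √(2 * ε / β) := by
  set y₀ := min (η / 2) √(2 * Δ / β)
  have hy₀ : 0 < y₀ := lt_min (by linarith) (Real.sqrt_pos.2 (by positivity))
  have hy₀Δ : quadLoss μ β 0 y₀ ≤ Δ := by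
    have h := (Real.le_sqrt hy₀.le (by positivity)).1 (min_le_right _ _)
    rw [le_div_iff₀ hβ] at h
    simp only [quadLoss]
    linarith
  have hy₀η : 2 * y₀ ≤ η := by linarith [min_le_left (η / 2) √(2 * Δ / β)]
  have hfar := le_abs_signStep_iterate hβ hy₀ hy₀η T
  have hnear := abs_le_sqrt_of_quadLoss_le hβ hμ
    ((quadLoss_comm _ _ _ _).symm.trans_le (hconv 0 y₀ hy₀Δ))
  by_contra! h
  have : √(2 * ε / β) < y₀ :=
    lt_min (by linarith) ((Real.sqrt_lt_sqrt_iff_of_pos (by positivity)).2 (by gcongr))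
  linarith

lemma sub_one_mul_sqrt_le_two_mul_of_iterate_quadLoss_le (hμ : 0 < μ) (hβ : 0 < β)
    (hε : 0 < ε)
    (hconv : ∀ x y, quadLoss μ β x y ≤ Δ →
      quadLoss μ β ((signStep η μ)^[T] x) ((signStep η β)^[T] y) ≤ ε) :
    (√(Δ / ε) - 1) * √(β / μ) ≤ 2 * T := by
  rcases le_or_gt Δ ε with hΔε | hεΔ
  · have hk : √(Δ / ε) ≤ 1 := Real.sqrt_le_one.2 ((div_le_one hε).2 hΔε)
    have : (√(Δ / ε) - 1) * √(β / μ) ≤ 0 :=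
      mul_nonpos_of_nonpos_of_nonneg (by linarith) (Real.sqrt_nonneg _)
    linarith [(Nat.cast_nonneg T : (0 : ℝ) ≤ T)]
  have hΔ : 0 < Δ := hε.trans hεΔ
  set u := √(2 * ε / β)
  set r := √(β / μ)
  set k := √(Δ / ε)
  have hu : 0 < u := Real.sqrt_pos.2 (by positivity)
  have hr : 0 < r := Real.sqrt_pos.2 (by positivity)
  have hk : 1 < k := Real.lt_sqrt_of_sq_lt (by rw [one_pow]; exact (one_lt_div hε).2 hεΔ)
  have hεsplit : √(2 * ε / μ) = u * r := by
    rw [← Real.sqrt_mul (by positivity)]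
    congr 1
    field_simp
  have hΔsplit : √(2 * Δ / μ) = k * (u * r) := by
    rw [← hεsplit, ← Real.sqrt_mul (by positivity)]
    congr 1
    field_simp
  have hdrift := sqrt_sub_sqrt_le_mul_posPart (η := η) hμ hβ.le hΔ.le hconv
  rw [hεsplit, hΔsplit] at hdrift
  have hη : 0 < η := by
    have : 0 < (T : ℝ) * η⁺ := by nlinarith [mul_pos (sub_pos.2 hk) (mul_pos hu hr)]
    exact posPart_pos_iff.1 (pos_of_mul_pos_right this (Nat.cast_nonneg T))
  have hstep := le_two_mul_sqrt_of_iterate_quadLoss_le hμ.le hβ hη hΔ hεΔ hconv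
  rw [posPart_of_nonneg hη.le] at hdrift
  have : (k - 1) * r * u ≤ 2 * T * u := by
    nlinarith [mul_le_mul_of_nonneg_left hstep (Nat.cast_nonneg (α := ℝ) T)]
  exact le_of_mul_le_mul_right this hu

end lowerBound

theorem sophia_signgd_lower_bound_general
    (μ β Δ ε : ℝ) (hμ : 0 < μ) (hβ : 0 < β) (hε : 0 < ε)
    (η : ℝ) (T : ℕ)
    (H : ∀ θ0 : ℝ × ℝ, μ / 2 * θ0.1 ^ 2 + β / 2 * θ0.2 ^ 2 ≤ Δ →
      ∀ θseq : ℕ → ℝ × ℝ, θseq 0 = θ0 →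
        (∀ t, θseq (t + 1) =
          ((θseq t).1 - η * Real.sign (μ * (θseq t).1),
           (θseq t).2 - η * Real.sign (β * (θseq t).2))) →
        μ / 2 * (θseq (T - 1)).1 ^ 2 + β / 2 * (θseq (T - 1)).2 ^ 2 ≤ ε ∧
        μ / 2 * (θseq T).1 ^ 2 + β / 2 * (θseq T).2 ^ 2 ≤ ε) :
    (1 / 2) * (Real.sqrt (Δ / ε) - Real.sqrt 2) * Real.sqrt (β / μ) ≤ (T : ℝ) := by
  have hconv : ∀ x y, quadLoss μ β x y ≤ Δ →
      quadLoss μ β ((signStep η μ)^[T] x) ((signStep η β)^[T] y) ≤ ε := fun x y h =>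
    (H (x, y) h (fun t => ((signStep η μ)^[t] x, (signStep η β)^[t] y)) rfl
      fun t => by simp only [Function.iterate_succ_apply']; rfl).2
  have hbound := sub_one_mul_sqrt_le_two_mul_of_iterate_quadLoss_le hμ hβ hε hconv
  have hslack : (√(Δ / ε) - √2) * √(β / μ) ≤ (√(Δ / ε) - 1) * √(β / μ) :=
    mul_le_mul_of_nonneg_right (by linarith [Real.one_lt_sqrt_two]) (Real.sqrt_nonneg _)
  linarith

/-- Lower bound for SignGD on the quadratic `L(θ) = (μ/2)θ₁² + (β/2)θ₂²`: if a learning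
rate `η` and a time `T` are such that, from every initialization with loss at most `Δ`,
the SignGD iterates have loss at most `ε` at both steps `T-1` and `T`, then
`T ≥ (1/2)(√(Δ/ε) - √2)·√(β/μ)`. -/
theorem sophia_signgd_lower_bound
    (μ β Δ ε : ℝ) (hμ : 0 < μ) (hβ : 0 < β) (hΔ : 0 < Δ) (hε : 0 < ε)
    (η : ℝ) (T : ℕ) (hT : 1 ≤ T)
    (H : ∀ θ0 : ℝ × ℝ, μ / 2 * θ0.1 ^ 2 + β / 2 * θ0.2 ^ 2 ≤ Δ →
      ∀ θseq : ℕ → ℝ × ℝ, θseq 0 = θ0 →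
        (∀ t, θseq (t + 1) =
          ((θseq t).1 - η * Real.sign (μ * (θseq t).1),
           (θseq t).2 - η * Real.sign (β * (θseq t).2))) →
        μ / 2 * (θseq (T - 1)).1 ^ 2 + β / 2 * (θseq (T - 1)).2 ^ 2 ≤ ε ∧
        μ / 2 * (θseq T).1 ^ 2 + β / 2 * (θseq T).2 ^ 2 ≤ ε) :
    (1 / 2) * (Real.sqrt (Δ / ε) - Real.sqrt 2) * Real.sqrt (β / μ) ≤ (T : ℝ) :=
  sophia_signgd_lower_bound_general μ β Δ ε hμ hβ hε η T H
end
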